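/- arXiv:2012.09145 — 2 statements merged into one kernel-verified Lean document; each statement's English description precedes it below -/
import Mathlib

section
/- Agmon-type eigenfunction decay: for each M > 0 there exist ε, C, h₀ > 0 such that for all h ∈ (0,h₀), every eigenfunction ψ of the Dirichlet realization of −h²Δ + x on Ω with eigenvalue λ ≤ x_min + M h^{2/3} satisfies ∫_Ω e^{ε|x − x_min|^{3/2}/h} |ψ|² dx dy ≤ C‖ψ‖². -/
open MeasureTheory

/-- `ψ` is an eigenfunction, with eigenvalue `lam`, of the Dirichlet realization of the
Stark operator `−h²Δ + x` on `Ω`. -/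
def IsStarkEigen (h lam : ℝ) (Ω : Set (ℝ × ℝ)) (ψ : ℝ × ℝ → ℝ) : Prop :=
  (∃ p ∈ Ω, ψ p ≠ 0) ∧ ContDiffOn ℝ (⊤ : ℕ∞) ψ Ω ∧ ContinuousOn ψ (closure Ω) ∧
  (∀ p ∈ frontier Ω, ψ p = 0) ∧ MemLp ψ 2 (volume.restrict Ω) ∧
  ∀ p ∈ Ω,
    -h ^ 2 * (deriv (fun x => deriv (fun x' => ψ (x', p.2)) x) p.1 +
              deriv (fun y => deriv (fun y' => ψ (p.1, y')) y) p.2) + p.1 * ψ p = lam * ψ p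

section AuxAgmon

open MeasureTheory Filter Set Bornology

/-- derivative of `u ↦ (max u 0)^2`. -/
lemma hasDerivAt_sq_max (u : ℝ) :
    HasDerivAt (fun v => (max v 0) ^ 2) (2 * max u 0) u := by
  rcases lt_trichotomy u 0 with hu | hu | hu
  · have h0 : (fun v => (max v 0) ^ 2) =ᶠ[nhds u] fun _ => (0:ℝ) := by
      filter_upwards [eventually_lt_nhds hu] with v hv
      simp [max_eq_right hv.le]
    have : HasDerivAt (fun _ => (0:ℝ)) 0 u := hasDerivAt_const u 0
    simpa [max_eq_right hu.le] using this.congr_of_eventuallyEq h0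
  · subst hu
    rw [hasDerivAt_iff_tendsto_slope]
    have hb : ∀ v : ℝ, |slope (fun v => (max v 0) ^ 2) 0 v| ≤ |v| := by
      intro v
      rcases eq_or_ne v 0 with rfl | hv
      · simp [slope]
      · rw [slope_def_field]
        have : (max v 0) ^ 2 ≤ v ^ 2 := by
          rcases le_total v 0 with h | h
          · simp [max_eq_right h]; positivity
          · simp [max_eq_left h]
        have hle : |(max v 0) ^ 2 / v| ≤ |v| := by
          rw [abs_div]
          rw [div_le_iff₀ (by positivity)]
          calc |(max v 0)^2| = (max v 0)^2 := abs_of_nonneg (by positivity)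
            _ ≤ v ^ 2 := this
            _ = |v| * |v| := by rw [← abs_mul]; rw [abs_mul_self]; ring
        simpa [div_sub_div_same, sub_zero] using hle
    have : Tendsto (fun v : ℝ => |v|) (nhdsWithin 0 {0}ᶜ) (nhds 0) := by
      have := (continuous_abs.tendsto (0:ℝ))
      simpa using tendsto_nhdsWithin_of_tendsto_nhds this
    simpa using squeeze_zero_norm (fun v => by simpa [Real.norm_eq_abs] using hb v) this
  · have h0 : (fun v : ℝ => (max v 0) ^ 2) =ᶠ[nhds u] fun v => v ^ 2 := by
      filter_upwards [eventually_gt_nhds hu] with v hv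
      simp [max_eq_left hv.le]
    have : HasDerivAt (fun v : ℝ => v ^ 2) (2 * u) u := by
      simpa using hasDerivAt_pow 2 u
    simpa [max_eq_left hu.le] using this.congr_of_eventuallyEq h0

noncomputable def Ht (t s : ℝ) : ℝ := (max (s^2 - t^2) 0)^2 / s^3

noncomputable def Htd (t s : ℝ) : ℝ :=
  (max (s^2 - t^2) 0) * (4*s^2 - 3*(max (s^2 - t^2) 0)) / s^4

lemma Ht_zero {t s : ℝ} (hs : |s| ≤ t) : Ht t s = 0 := by
  have h1 : s^2 - t^2 ≤ 0 := by nlinarith [abs_nonneg s, sq_abs s]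
  simp [Ht, max_eq_right h1]

lemma Htd_zero {t s : ℝ} (hs : |s| ≤ t) : Htd t s = 0 := by
  have h1 : s^2 - t^2 ≤ 0 := by nlinarith [abs_nonneg s, sq_abs s]
  simp [Htd, max_eq_right h1]

lemma max_le_sq {t s : ℝ} : max (s^2 - t^2) 0 ≤ s^2 := by
  rcases le_total (s^2 - t^2) 0 with h | h
  · rw [max_eq_right h]; positivity
  · rw [max_eq_left h]; nlinarith [sq_nonneg t]

lemma Htd_nonneg (t s : ℝ) : 0 ≤ Htd t s := by
  have h1 : (0:ℝ) ≤ max (s^2 - t^2) 0 := le_max_right _ _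
  have h2 : max (s^2 - t^2) 0 ≤ s^2 := max_le_sq
  apply div_nonneg _ (by positivity)
  nlinarith

lemma Ht_mul_self_nonneg (t s : ℝ) : 0 ≤ Ht t s * s := by
  rcases eq_or_ne s 0 with rfl | hs
  · simp [Ht]
  · have : Ht t s * s = (max (s^2 - t^2) 0)^2 / s^2 := by
      rw [Ht]; field_simp
    rw [this]; positivity

lemma Ht_mul_self_le (t s : ℝ) : Ht t s * s ≤ s^2 := by
  rcases eq_or_ne s 0 with rfl | hs
  · simp [Ht]
  · have h : Ht t s * s = (max (s^2 - t^2) 0)^2 / s^2 := by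
      rw [Ht]; field_simp
    rw [h, div_le_iff₀ (by positivity)]
    have h2 : max (s^2 - t^2) 0 ≤ s^2 := max_le_sq
    have h1 : (0:ℝ) ≤ max (s^2 - t^2) 0 := le_max_right _ _
    nlinarith

lemma Ht_key (t s : ℝ) : Ht t s * (Ht t s - s * Htd t s) ≤ 0 := by
  rcases eq_or_ne s 0 with rfl | hs
  · simp [Ht]
  · set m := max (s^2 - t^2) 0 with hm
    have h1 : (0:ℝ) ≤ m := le_max_right _ _
    have h2 : m ≤ s^2 := max_le_sq
    have key : Ht t s * (Ht t s - s * Htd t s) = 4 * m^3 * (m - s^2) / s^6 := by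
      rw [Ht, Htd]; field_simp; ring
    rw [key]
    apply div_nonpos_of_nonpos_of_nonneg _ (by positivity)
    nlinarith [mul_nonneg (pow_nonneg h1 3) (sub_nonneg.mpr h2)]

lemma Ht_hasDerivAt {t : ℝ} (ht : 0 < t) (s : ℝ) : HasDerivAt (Ht t) (Htd t s) s := by
  rcases eq_or_ne s 0 with rfl | hs
  · have h0 : Ht t =ᶠ[nhds 0] fun _ => (0:ℝ) := by
      have : ∀ᶠ v in nhds (0:ℝ), |v| < t := by
        have := (continuous_abs.tendsto (0:ℝ))
        exact this (Iio_mem_nhds (by simpa using ht))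
      filter_upwards [this] with v hv
      exact Ht_zero hv.le
    have : HasDerivAt (fun _ : ℝ => (0:ℝ)) 0 (0:ℝ) := hasDerivAt_const (0:ℝ) (0:ℝ)
    have h' := this.congr_of_eventuallyEq h0
    simpa [Htd] using h'
  · have hq : HasDerivAt (fun v : ℝ => (max (v^2 - t^2) 0)^2)
        (2 * max (s^2 - t^2) 0 * (2*s)) s := by
      have inner : HasDerivAt (fun v : ℝ => v^2 - t^2) (2*s) s := by
        simpa using (hasDerivAt_pow 2 s).sub_const (t^2)
      exact (hasDerivAt_sq_max (s^2 - t^2)).comp s inner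
    have hden : HasDerivAt (fun v : ℝ => v^3) (3*s^2) s := by
      simpa using hasDerivAt_pow 3 s
    have hdiv := hq.div hden (pow_ne_zero 3 hs)
    refine hdiv.congr_deriv ?_
    rw [Htd]
    have h3 : (s:ℝ)^3 ≠ 0 := pow_ne_zero 3 hs
    field_simp
    ring

/-- pointwise AM-GM quadratic inequality used in the Agmon identity. -/
lemma quad_ineq {c X Hs Hds s : ℝ} (hc : 0 ≤ c) (hHds : 0 ≤ Hds)
    (hkey : Hs * (Hs - s * Hds) ≤ 0) :
    0 ≤ Hds * X^2 + 2 * c * Hs * X + c^2 * (Hs * s) := by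
  rcases eq_or_lt_of_le hHds with h0 | hpos
  · obtain rfl : Hds = 0 := h0.symm
    have hHs : Hs = 0 := by nlinarith [sq_nonneg Hs]
    simp [hHs]
  · have h1 : Hs^2 ≤ Hs * s * Hds := by nlinarith
    nlinarith [sq_nonneg (Hds * X + c * Hs), sq_nonneg c, mul_pos hpos hpos]

/-- `Ht t s * s → s^2` as `t → 0⁺` along `1/(n+1)`. -/
lemma Ht_tendsto (s : ℝ) :
    Tendsto (fun n : ℕ => Ht ((n+1:ℝ)⁻¹) s * s) atTop (nhds (s^2)) := by
  have htend : Tendsto (fun n : ℕ => ((n:ℝ)+1)⁻¹) atTop (nhds 0) :=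
    tendsto_one_div_add_atTop_nhds_zero_nat.congr (by intro n; rw [one_div])
  rcases eq_or_ne s 0 with rfl | hs
  · simpa [Ht] using tendsto_const_nhds (x := (0:ℝ)) (f := atTop (α := ℕ))
  · have hfun : ∀ t : ℝ, Ht t s * s = (max (s^2 - t^2) 0)^2 / s^2 := by
      intro t; rw [Ht]; field_simp
    have hcont : Continuous fun t : ℝ => (max (s^2 - t^2) 0)^2 / s^2 := by
      apply Continuous.div_const
      apply Continuous.pow
      exact (continuous_const.sub (continuous_pow 2)).max continuous_const
    have := (hcont.tendsto 0).comp htend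
    have h0 : (max (s^2 - 0^2) 0)^2 / s^2 = s^2 := by
      rw [max_eq_left (by nlinarith [sq_nonneg s] : (0:ℝ) ≤ s^2 - 0^2)]
      field_simp; ring
    rw [h0] at this
    exact this.congr (fun n => by simp only [Function.comp_apply, hfun])

/-- integral of the derivative of a compactly supported function vanishes. -/
lemma integral_deriv_eq_zero (f f' : ℝ → ℝ) (hd : ∀ x, HasDerivAt f (f' x) x)
    (hc : Continuous f') (A : ℝ) (hA : 0 ≤ A) (hsupp : ∀ x, A ≤ |x| → f x = 0) :
    ∫ x, f' x = 0 := by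
  have hf'0 : ∀ x, A < |x| → f' x = 0 := by
    intro x hx
    have hev : f =ᶠ[nhds x] fun _ => 0 := by
      have : ∀ᶠ y in nhds x, A < |y| := by
        have : ContinuousAt (fun y : ℝ => |y|) x := continuous_abs.continuousAt
        exact this (Ioi_mem_nhds hx)
      filter_upwards [this] with y hy
      exact hsupp y hy.le
    have h0 : HasDerivAt f 0 x :=
      (hasDerivAt_const x (0:ℝ)).congr_of_eventuallyEq hev
    exact (hd x).unique h0
  have hcs : HasCompactSupport f' := by
    apply HasCompactSupport.intro (isCompact_Icc (a := -(A+1)) (b := A+1))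
    intro x hx
    apply hf'0
    simp only [mem_Icc, not_and_or, not_le] at hx
    rcases hx with hx | hx
    · rw [abs_of_neg (by linarith)]; linarith
    · rw [abs_of_pos (by linarith)]; linarith
  have hint : Integrable f' := hc.integrable_of_hasCompactSupport hcs
  have key : ∀ n : ℕ, ∫ x in (-(A+1+n))..(A+1+n), f' x = 0 := by
    intro n
    rw [intervalIntegral.integral_eq_sub_of_hasDerivAt (fun x _ => hd x)
      hint.intervalIntegrable]
    rw [hsupp _ (by rw [abs_of_pos (by positivity)]; push_cast; linarith),
        hsupp _ (by rw [abs_of_neg (by push_cast; linarith)]; push_cast; linarith)]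
    ring
  have hbt : Tendsto (fun n : ℕ => A+1+(n:ℝ)) atTop atTop :=
    tendsto_atTop_add_const_left atTop (A+1) (tendsto_natCast_atTop_atTop (R := ℝ))
  have hat : Tendsto (fun n : ℕ => -(A+1+(n:ℝ))) atTop atBot :=
    Filter.tendsto_neg_atBot_iff.mpr hbt
  have htt := MeasureTheory.intervalIntegral_tendsto_integral hint hat hbt
  have : Tendsto (fun _ : ℕ => (0:ℝ)) atTop (nhds (∫ x, f' x)) := by
    apply htt.congr
    intro n; rw [key n]
  exact (tendsto_nhds_unique tendsto_const_nhds this).symm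

/-- divergence theorem for compactly supported `C¹`-ish fields on `ℝ²`. -/
lemma divergence_zero (a b Da Db : ℝ × ℝ → ℝ)
    (hDa : Continuous Da) (hDb : Continuous Db)
    (hda : ∀ p : ℝ × ℝ, HasDerivAt (fun s => a (s, p.2)) (Da p) p.1)
    (hdb : ∀ p : ℝ × ℝ, HasDerivAt (fun s => b (p.1, s)) (Db p) p.2)
    (A : ℝ) (hA : 0 ≤ A)
    (hsupp : ∀ p : ℝ × ℝ, A ≤ |p.1| ∨ A ≤ |p.2| → a p = 0 ∧ b p = 0) :
    ∫ p, (Da p + Db p) = 0 := by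
  have hD0 : ∀ p : ℝ × ℝ, A < |p.1| ∨ A < |p.2| → Da p = 0 ∧ Db p = 0 := by
    intro p hp
    rcases hp with hp | hp
    · constructor
      · have hev : (fun s => a (s, p.2)) =ᶠ[nhds p.1] fun _ => 0 := by
          have : ∀ᶠ s in nhds p.1, A < |s| :=
            continuous_abs.continuousAt (Ioi_mem_nhds hp)
          filter_upwards [this] with s hs
          exact (hsupp (s, p.2) (Or.inl hs.le)).1
        exact (hda p).unique ((hasDerivAt_const p.1 (0:ℝ)).congr_of_eventuallyEq hev)
      · have hev : (fun s => b (p.1, s)) =ᶠ[nhds p.2] fun _ => 0 := by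
          apply Filter.Eventually.of_forall
          intro s
          exact (hsupp (p.1, s) (Or.inl hp.le)).2
        exact (hdb p).unique ((hasDerivAt_const p.2 (0:ℝ)).congr_of_eventuallyEq hev)
    · constructor
      · have hev : (fun s => a (s, p.2)) =ᶠ[nhds p.1] fun _ => 0 := by
          apply Filter.Eventually.of_forall
          intro s
          exact (hsupp (s, p.2) (Or.inr hp.le)).1
        exact (hda p).unique ((hasDerivAt_const p.1 (0:ℝ)).congr_of_eventuallyEq hev)
      · have hev : (fun s => b (p.1, s)) =ᶠ[nhds p.2] fun _ => 0 := by
          have : ∀ᶠ s in nhds p.2, A < |s| :=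
            continuous_abs.continuousAt (Ioi_mem_nhds hp)
          filter_upwards [this] with s hs
          exact (hsupp (p.1, s) (Or.inr hs.le)).2
        exact (hdb p).unique ((hasDerivAt_const p.2 (0:ℝ)).congr_of_eventuallyEq hev)
  have hKcomp : IsCompact (Icc (-(A+1)) (A+1) ×ˢ Icc (-(A+1)) (A+1) : Set (ℝ × ℝ)) :=
    isCompact_Icc.prod isCompact_Icc
  have hmem : ∀ p : ℝ × ℝ, p ∉ (Icc (-(A+1)) (A+1) ×ˢ Icc (-(A+1)) (A+1) : Set (ℝ × ℝ)) →
      A < |p.1| ∨ A < |p.2| := by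
    intro p hp
    by_contra hc
    push_neg at hc
    obtain ⟨h1, h2⟩ := hc
    rw [abs_le] at h1 h2
    exact hp ⟨⟨by linarith [h1.1], by linarith [h1.2]⟩,
      ⟨by linarith [h2.1], by linarith [h2.2]⟩⟩
  have hcsDa : HasCompactSupport Da :=
    HasCompactSupport.intro hKcomp (fun p hp => ((hD0 p) (hmem p hp)).1)
  have hcsDb : HasCompactSupport Db :=
    HasCompactSupport.intro hKcomp (fun p hp => ((hD0 p) (hmem p hp)).2)
  have hintDa : Integrable Da := hDa.integrable_of_hasCompactSupport hcsDa
  have hintDb : Integrable Db := hDb.integrable_of_hasCompactSupport hcsDb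
  have hIa : ∫ p, Da p = 0 := by
    rw [show (volume : Measure (ℝ × ℝ)) = (volume : Measure ℝ).prod volume from
      MeasureTheory.Measure.volume_eq_prod ℝ ℝ] at hintDa ⊢
    rw [MeasureTheory.integral_prod_symm _ hintDa]
    have hz : ∀ y : ℝ, ∫ x, Da (x, y) = 0 := by
      intro y
      apply integral_deriv_eq_zero (fun x => a (x, y)) (fun x => Da (x, y))
        (fun x => hda (x, y)) (hDa.comp (continuous_id.prodMk continuous_const)) A hA
      intro x hx
      exact (hsupp (x, y) (Or.inl hx)).1
    simp only [hz]
    simp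
  have hIb : ∫ p, Db p = 0 := by
    rw [show (volume : Measure (ℝ × ℝ)) = (volume : Measure ℝ).prod volume from
      MeasureTheory.Measure.volume_eq_prod ℝ ℝ] at hintDb ⊢
    rw [MeasureTheory.integral_prod _ hintDb]
    have hz : ∀ x : ℝ, ∫ y, Db (x, y) = 0 := by
      intro x
      apply integral_deriv_eq_zero (fun y => b (x, y)) (fun y => Db (x, y))
        (fun y => hdb (x, y)) (hDb.comp (continuous_const.prodMk continuous_id)) A hA
      intro y hy
      exact (hsupp (x, y) (Or.inr hy)).2
    simp only [hz]
    simp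
  rw [integral_add hintDa hintDb, hIa, hIb, add_zero]

/-- extension-by-zero of `g(ψ p) * u p`, where `g` vanishes on `[-t,t]`:
continuity, compact support, local vanishing off `Ω`. -/
lemma glue (Ω : Set (ℝ × ℝ)) (hΩ : IsOpen Ω) (hΩb : IsBounded Ω) (ψ : ℝ × ℝ → ℝ)
    (hψc : ContinuousOn ψ (closure Ω)) (hfr : ∀ p ∈ frontier Ω, ψ p = 0)
    (g : ℝ → ℝ) (hg : Continuous g) (t : ℝ) (ht : 0 < t) (hgt : ∀ s, |s| ≤ t → g s = 0)
    (u : ℝ × ℝ → ℝ) (hu : ContinuousOn u Ω) :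
    Continuous (Ω.indicator (fun p => g (ψ p) * u p)) ∧
    HasCompactSupport (Ω.indicator (fun p => g (ψ p) * u p)) ∧
    (∀ p ∉ Ω, (Ω.indicator (fun p => g (ψ p) * u p)) =ᶠ[nhds p] fun _ => 0) := by
  set v : ℝ × ℝ → ℝ := Ω.indicator (fun p => g (ψ p) * u p) with hv
  have hloc0 : ∀ p ∉ Ω, v =ᶠ[nhds p] fun _ => 0 := by
    intro p hp
    by_cases hpc : p ∈ closure Ω
    · have hpf : p ∈ frontier Ω := by
        rw [frontier, hΩ.interior_eq]; exact ⟨hpc, hp⟩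
      have hψp : ψ p = 0 := hfr p hpf
      have hcw : ContinuousWithinAt ψ (closure Ω) p := hψc p hpc
      have h2 : Tendsto (fun q => |ψ q|) (nhdsWithin p (closure Ω)) (nhds 0) := by
        have := continuous_abs.continuousAt.tendsto.comp hcw
        simpa [hψp, Function.comp_def] using this
      have hev : ∀ᶠ q in nhdsWithin p (closure Ω), |ψ q| < t := h2 (Iio_mem_nhds ht)
      rw [eventually_nhdsWithin_iff] at hev
      filter_upwards [hev] with q hq
      by_cases hqΩ : q ∈ Ω
      · have hlt : |ψ q| < t := hq (subset_closure hqΩ)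
        simp [v, indicator_of_mem hqΩ, hgt _ hlt.le]
      · simp [v, indicator_of_notMem hqΩ]
    · have : ∀ᶠ q in nhds p, q ∈ (closure Ω)ᶜ :=
        (isOpen_compl_iff.mpr isClosed_closure).mem_nhds hpc
      filter_upwards [this] with q hq
      have hqn : q ∉ Ω := fun h => hq (subset_closure h)
      simp [v, indicator_of_notMem hqn]
  have hcont : Continuous v := by
    rw [continuous_iff_continuousAt]
    intro p
    by_cases hp : p ∈ Ω
    · have hψcont : ContinuousAt ψ p :=
        (hψc.mono subset_closure p hp).continuousAt (hΩ.mem_nhds hp)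
      have hucont : ContinuousAt u p := hu.continuousAt (hΩ.mem_nhds hp)
      have h1 : ContinuousAt (fun q => g (ψ q) * u q) p :=
        ((hg.continuousAt).comp hψcont).mul hucont
      apply h1.congr
      filter_upwards [hΩ.mem_nhds hp] with q hq
      simp [v, indicator_of_mem hq]
    · exact ContinuousAt.congr (continuousAt_const) ((hloc0 p hp).symm)
  refine ⟨hcont, ?_, hloc0⟩
  have hK : IsCompact {q ∈ closure Ω | t ≤ |ψ q|} := by
    apply IsCompact.of_isClosed_subset hΩb.isCompact_closure ?_ (sep_subset _ _)
    have heq : {q ∈ closure Ω | t ≤ |ψ q|} = closure Ω ∩ (fun q => |ψ q|) ⁻¹' (Ici t) := by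
      ext q; simp [Set.mem_sep_iff, and_comm]
    rw [heq]
    exact ContinuousOn.preimage_isClosed_of_isClosed
      (continuous_abs.comp_continuousOn hψc) isClosed_closure isClosed_Ici
  apply HasCompactSupport.intro hK
  intro q hq
  by_cases hqΩ : q ∈ Ω
  · have hnot : ¬ t ≤ |ψ q| := fun h => hq ⟨subset_closure hqΩ, h⟩
    push_neg at hnot
    simp [v, indicator_of_mem hqΩ, hgt _ hnot.le]
  · simp [v, indicator_of_notMem hqΩ]

section Core

variable (Ω : Set (ℝ × ℝ)) (hΩ : IsOpen Ω) (hΩb : IsBounded Ω)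
  (ψ : ℝ × ℝ → ℝ) (h lam m t : ℝ)

set_option maxHeartbeats 1000000 in
/-- Core weighted integral inequality for a fixed truncation parameter `t`. -/
lemma core (hΩ : IsOpen Ω) (hΩb : IsBounded Ω)
    (hsm : ContDiffOn ℝ (⊤ : ℕ∞) ψ Ω) (hψc : ContinuousOn ψ (closure Ω))
    (hfr : ∀ p ∈ frontier Ω, ψ p = 0)
    (hPDE : ∀ p ∈ Ω,
      -h ^ 2 * (deriv (fun x => deriv (fun x' => ψ (x', p.2)) x) p.1 +
                deriv (fun y => deriv (fun y' => ψ (p.1, y')) y) p.2) + p.1 * ψ p = lam * ψ p)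
    (hh : 0 < h) (ht : 0 < t) (hm : ∀ p ∈ Ω, m < p.1) :
    ∫ p in Ω, Real.exp (2/3 * |p.1 - m| ^ ((3:ℝ)/2) / h) * (p.1 - lam) * (Ht t (ψ p) * ψ p)
      ≤ ∫ p in Ω, Real.exp (2/3 * |p.1 - m| ^ ((3:ℝ)/2) / h) * ((p.1 - m)/4) *
          (Ht t (ψ p) * ψ p) := by
  classical
  -- weight
  set w : ℝ → ℝ := fun x => Real.exp (2/3 * |x - m| ^ ((3:ℝ)/2) / h) with hw
  set wd : ℝ → ℝ := fun x => (x - m) ^ ((1:ℝ)/2) / h * w x with hwd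
  have hwpos : ∀ x, 0 < w x := fun x => Real.exp_pos _
  have hwcont : Continuous w := by
    apply Real.continuous_exp.comp
    apply Continuous.div_const
    apply Continuous.mul continuous_const
    rw [continuous_iff_continuousAt]
    intro x
    exact (Real.continuousAt_rpow_const _ _ (Or.inr (by norm_num))).comp
      ((continuous_abs.comp (continuous_id.sub continuous_const)).continuousAt)
  have hwderiv : ∀ x, m < x → HasDerivAt w (wd x) x := by
    intro x hx
    have hev : w =ᶠ[nhds x] fun u => Real.exp (2/3 * (u - m) ^ ((3:ℝ)/2) / h) := by
      filter_upwards [eventually_gt_nhds hx] with u hu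
      rw [hw]
      simp only
      rw [abs_of_pos (by linarith)]
    have hbase : HasDerivAt (fun u : ℝ => u - m) 1 x := (hasDerivAt_id x).sub_const m
    have hrpow : HasDerivAt (fun v : ℝ => v ^ ((3:ℝ)/2))
        ((3:ℝ)/2 * (x - m) ^ ((1:ℝ)/2)) (x - m) := by
      have := Real.hasDerivAt_rpow_const (x := x - m) (p := (3:ℝ)/2)
        (Or.inl (ne_of_gt (by linarith)))
      convert this using 2
      norm_num
    have hcomp : HasDerivAt (fun u : ℝ => (u - m) ^ ((3:ℝ)/2))
        ((3:ℝ)/2 * (x - m) ^ ((1:ℝ)/2)) x := by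
      have := hrpow.comp x hbase
      simpa [Function.comp_def] using this
    have hscale : HasDerivAt (fun u : ℝ => 2/3 * (u - m) ^ ((3:ℝ)/2) / h)
        ((x - m) ^ ((1:ℝ)/2) / h) x := by
      have := (hcomp.const_mul ((2:ℝ)/3)).div_const h
      refine this.congr_deriv ?_
      ring
    have hexp := hscale.exp
    have : HasDerivAt (fun u : ℝ => Real.exp (2/3 * (u - m) ^ ((3:ℝ)/2) / h))
        (wd x) x := by
      convert hexp using 1
      rw [hwd, hw]
      simp only
      rw [abs_of_pos (by linarith)]
      ring
    exact this.congr_of_eventuallyEq hev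
  -- first and second partial derivatives via fderiv
  set F1 : ℝ × ℝ → ℝ := fun p => fderiv ℝ ψ p (1, 0) with hF1def
  set F2 : ℝ × ℝ → ℝ := fun p => fderiv ℝ ψ p (0, 1) with hF2def
  set F11 : ℝ × ℝ → ℝ := fun p => fderiv ℝ F1 p (1, 0) with hF11def
  set F22 : ℝ × ℝ → ℝ := fun p => fderiv ℝ F2 p (0, 1) with hF22def
  have hfd : ContDiffOn ℝ (⊤ : ℕ∞) (fun q => fderiv ℝ ψ q) Ω := hsm.fderiv_of_isOpen hΩ (mod_cast le_top)
  have hF1sm : ContDiffOn ℝ (⊤ : ℕ∞) F1 Ω :=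
    (ContinuousLinearMap.apply ℝ ℝ (((1:ℝ),(0:ℝ)) : ℝ × ℝ)).contDiff.comp_contDiffOn hfd
  have hF2sm : ContDiffOn ℝ (⊤ : ℕ∞) F2 Ω :=
    (ContinuousLinearMap.apply ℝ ℝ (((0:ℝ),(1:ℝ)) : ℝ × ℝ)).contDiff.comp_contDiffOn hfd
  have hfd1 : ContDiffOn ℝ (⊤ : ℕ∞) (fun q => fderiv ℝ F1 q) Ω := hF1sm.fderiv_of_isOpen hΩ (mod_cast le_top)
  have hfd2 : ContDiffOn ℝ (⊤ : ℕ∞) (fun q => fderiv ℝ F2 q) Ω := hF2sm.fderiv_of_isOpen hΩ (mod_cast le_top)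
  have hF11sm : ContDiffOn ℝ (⊤ : ℕ∞) F11 Ω :=
    (ContinuousLinearMap.apply ℝ ℝ (((1:ℝ),(0:ℝ)) : ℝ × ℝ)).contDiff.comp_contDiffOn hfd1
  have hF22sm : ContDiffOn ℝ (⊤ : ℕ∞) F22 Ω :=
    (ContinuousLinearMap.apply ℝ ℝ (((0:ℝ),(1:ℝ)) : ℝ × ℝ)).contDiff.comp_contDiffOn hfd2
  have hF11cont : ContinuousOn F11 Ω := hF11sm.continuousOn
  have hF22cont : ContinuousOn F22 Ω := hF22sm.continuousOn
  -- sectional derivatives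
  have hsec1 : ∀ (g : ℝ × ℝ → ℝ), ContDiffOn ℝ (⊤ : ℕ∞) g Ω → ∀ p ∈ Ω,
      HasDerivAt (fun s => g (s, p.2)) (fderiv ℝ g p (1, 0)) p.1 := by
    intro g hg p hp
    obtain ⟨x, y⟩ := p
    have hdiff : DifferentiableAt ℝ g (x, y) :=
      (hg.contDiffAt (hΩ.mem_nhds hp)).differentiableAt (by simp)
    have hcurve : HasDerivAt (fun s : ℝ => (s, y)) ((1:ℝ), (0:ℝ)) x := by
      have := (hasDerivAt_id x).prodMk (hasDerivAt_const x y)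
      simpa using this
    exact hdiff.hasFDerivAt.comp_hasDerivAt x hcurve
  have hsec2 : ∀ (g : ℝ × ℝ → ℝ), ContDiffOn ℝ (⊤ : ℕ∞) g Ω → ∀ p ∈ Ω,
      HasDerivAt (fun s => g (p.1, s)) (fderiv ℝ g p (0, 1)) p.2 := by
    intro g hg p hp
    obtain ⟨x, y⟩ := p
    have hdiff : DifferentiableAt ℝ g (x, y) :=
      (hg.contDiffAt (hΩ.mem_nhds hp)).differentiableAt (by simp)
    have hcurve : HasDerivAt (fun s : ℝ => (x, s)) ((0:ℝ), (1:ℝ)) y := by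
      have := (hasDerivAt_const y x).prodMk (hasDerivAt_id y)
      simpa using this
    exact hdiff.hasFDerivAt.comp_hasDerivAt y hcurve
  have hB1 : ∀ p ∈ Ω, HasDerivAt (fun s => ψ (s, p.2)) (F1 p) p.1 := hsec1 ψ hsm
  have hB2 : ∀ p ∈ Ω, HasDerivAt (fun s => ψ (p.1, s)) (F2 p) p.2 := hsec2 ψ hsm
  have hB11 : ∀ p ∈ Ω, HasDerivAt (fun s => F1 (s, p.2)) (F11 p) p.1 := hsec1 F1 hF1sm
  have hB22 : ∀ p ∈ Ω, HasDerivAt (fun s => F2 (p.1, s)) (F22 p) p.2 := hsec2 F2 hF2sm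
  -- the PDE in terms of F11, F22
  have hPDE' : ∀ p ∈ Ω, F11 p + F22 p = (p.1 - lam) * ψ p / h^2 := by
    intro p hp
    have hkey := hPDE p hp
    have hx : deriv (fun x => deriv (fun x' => ψ (x', p.2)) x) p.1 = F11 p := by
      have hev : (fun x => deriv (fun x' => ψ (x', p.2)) x) =ᶠ[nhds p.1]
          (fun x => F1 (x, p.2)) := by
        have hop : IsOpen {x : ℝ | (x, p.2) ∈ Ω} :=
          hΩ.preimage (continuous_id.prodMk continuous_const)
        have hmem : p.1 ∈ {x : ℝ | (x, p.2) ∈ Ω} := hp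
        filter_upwards [hop.mem_nhds hmem] with x hx
        exact ((hB1 (x, p.2) hx)).deriv
      rw [hev.deriv_eq]
      exact (hB11 p hp).deriv
    have hy : deriv (fun y => deriv (fun y' => ψ (p.1, y')) y) p.2 = F22 p := by
      have hev : (fun y => deriv (fun y' => ψ (p.1, y')) y) =ᶠ[nhds p.2]
          (fun y => F2 (p.1, y)) := by
        have hop : IsOpen {y : ℝ | (p.1, y) ∈ Ω} :=
          hΩ.preimage (continuous_const.prodMk continuous_id)
        have hmem : p.2 ∈ {y : ℝ | (p.1, y) ∈ Ω} := hp
        filter_upwards [hop.mem_nhds hmem] with y hy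
        exact ((hB2 (p.1, y) hy)).deriv
      rw [hev.deriv_eq]
      exact (hB22 p hp).deriv
    rw [hx, hy] at hkey
    have h2 : h^2 ≠ 0 := by positivity
    field_simp
    nlinarith [hkey]
  -- continuity of truncation functions
  have hHtcont : Continuous (Ht t) := by
    rw [continuous_iff_continuousAt]
    exact fun s => (Ht_hasDerivAt ht s).continuousAt
  have hHtdcont : Continuous (Htd t) := by
    rw [continuous_iff_continuousAt]
    intro s
    rcases eq_or_ne s 0 with rfl | hs
    · have hev : Htd t =ᶠ[nhds (0:ℝ)] fun _ => 0 := by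
        have habs : ∀ᶠ v in nhds (0:ℝ), |v| < t := by
          have := (continuous_abs.tendsto (0:ℝ))
          exact this (Iio_mem_nhds (by simpa using ht))
        filter_upwards [habs] with v hv
        exact Htd_zero hv.le
      exact ContinuousAt.congr continuousAt_const hev.symm
    · apply ContinuousAt.div
      · fun_prop
      · fun_prop
      · exact pow_ne_zero 4 hs
  have hwdcont : Continuous wd := by
    rw [hwd]
    apply Continuous.mul _ hwcont
    apply Continuous.div_const
    rw [continuous_iff_continuousAt]
    intro x
    exact (Real.continuousAt_rpow_const _ _ (Or.inr (by norm_num))).comp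
      ((continuous_id.sub continuous_const).continuousAt)
  -- continuity on Ω of the coefficient functions
  have hF1cont : ContinuousOn F1 Ω := hF1sm.continuousOn
  have hF2cont : ContinuousOn F2 Ω := hF2sm.continuousOn
  have hψcont : ContinuousOn ψ Ω := hψc.mono subset_closure
  set ua : ℝ × ℝ → ℝ := fun p => w p.1 * F1 p with hua
  set ub : ℝ × ℝ → ℝ := fun p => w p.1 * F2 p with hub
  set u1 : ℝ × ℝ → ℝ := fun p => wd p.1 * F1 p + w p.1 * F11 p with hu1
  set u2 : ℝ × ℝ → ℝ := fun p => w p.1 * F1 p ^ 2 with hu2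
  set u3 : ℝ × ℝ → ℝ := fun p => w p.1 * F22 p with hu3
  set u4 : ℝ × ℝ → ℝ := fun p => w p.1 * F2 p ^ 2 with hu4
  have hwfst : Continuous (fun p : ℝ × ℝ => w p.1) := hwcont.comp continuous_fst
  have hwdfst : Continuous (fun p : ℝ × ℝ => wd p.1) := hwdcont.comp continuous_fst
  have huacont : ContinuousOn ua Ω := hwfst.continuousOn.mul hF1cont
  have hubcont : ContinuousOn ub Ω := hwfst.continuousOn.mul hF2cont
  have hu1cont : ContinuousOn u1 Ω :=
    (hwdfst.continuousOn.mul hF1cont).add (hwfst.continuousOn.mul hF11cont)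
  have hu2cont : ContinuousOn u2 Ω := hwfst.continuousOn.mul (hF1cont.pow 2)
  have hu3cont : ContinuousOn u3 Ω := hwfst.continuousOn.mul hF22cont
  have hu4cont : ContinuousOn u4 Ω := hwfst.continuousOn.mul (hF2cont.pow 2)
  -- glue instances
  have gA := glue Ω hΩ hΩb ψ hψc hfr (Ht t) hHtcont t ht (fun s hs => Ht_zero hs) ua huacont
  have gB := glue Ω hΩ hΩb ψ hψc hfr (Ht t) hHtcont t ht (fun s hs => Ht_zero hs) ub hubcont
  have g1 := glue Ω hΩ hΩb ψ hψc hfr (Ht t) hHtcont t ht (fun s hs => Ht_zero hs) u1 hu1cont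
  have g2 := glue Ω hΩ hΩb ψ hψc hfr (Htd t) hHtdcont t ht (fun s hs => Htd_zero hs) u2 hu2cont
  have g3 := glue Ω hΩ hΩb ψ hψc hfr (Ht t) hHtcont t ht (fun s hs => Ht_zero hs) u3 hu3cont
  have g4 := glue Ω hΩ hΩb ψ hψc hfr (Htd t) hHtdcont t ht (fun s hs => Htd_zero hs) u4 hu4cont
  set a : ℝ × ℝ → ℝ := Ω.indicator (fun p => Ht t (ψ p) * ua p) with hadef
  set b : ℝ × ℝ → ℝ := Ω.indicator (fun p => Ht t (ψ p) * ub p) with hbdef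
  set Da : ℝ × ℝ → ℝ := Ω.indicator (fun q => Ht t (ψ q) * u1 q) +
      Ω.indicator (fun q => Htd t (ψ q) * u2 q) with hDadef
  set Db : ℝ × ℝ → ℝ := Ω.indicator (fun q => Ht t (ψ q) * u3 q) +
      Ω.indicator (fun q => Htd t (ψ q) * u4 q) with hDbdef
  have hDacont : Continuous Da := g1.1.add g2.1
  have hDbcont : Continuous Db := g3.1.add g4.1
  -- sectional derivatives of the fields
  have hda : ∀ p : ℝ × ℝ, HasDerivAt (fun s => a (s, p.2)) (Da p) p.1 := by
    rintro ⟨x, y⟩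
    by_cases hp : (x, y) ∈ Ω
    · have hop : IsOpen {s : ℝ | (s, y) ∈ Ω} :=
        hΩ.preimage (continuous_id.prodMk continuous_const)
      have hev : (fun s => a (s, y)) =ᶠ[nhds x]
          (fun s => Ht t (ψ (s, y)) * (w s * F1 (s, y))) := by
        filter_upwards [hop.mem_nhds hp] with s hs
        simp [hadef, indicator_of_mem hs, hua]
      have hHts : HasDerivAt (fun s => Ht t (ψ (s, y))) (Htd t (ψ (x, y)) * F1 (x, y)) x := by
        have := (Ht_hasDerivAt ht (ψ (x, y))).comp x (hB1 (x, y) hp)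
        simpa [Function.comp_def] using this
      have hprod : HasDerivAt (fun s => w s * F1 (s, y))
          (wd x * F1 (x, y) + w x * F11 (x, y)) x :=
        (hwderiv x (hm (x, y) hp)).mul (hB11 (x, y) hp)
      have hfull := hHts.mul hprod
      have hval : Da (x, y) = Htd t (ψ (x, y)) * F1 (x, y) * (w x * F1 (x, y)) +
          Ht t (ψ (x, y)) * (wd x * F1 (x, y) + w x * F11 (x, y)) := by
        simp [hDadef, Pi.add_apply, indicator_of_mem hp, hu1, hu2]
        ring
      rw [hval]
      exact hfull.congr_of_eventuallyEq hev
    · have hev0 : (fun s => a (s, y)) =ᶠ[nhds x] fun _ => 0 := by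
        have htend : Tendsto (fun s : ℝ => (s, y)) (nhds x) (nhds (x, y)) :=
          ((continuous_id.prodMk continuous_const).tendsto x)
        exact htend.eventually (gA.2.2 (x, y) hp)
      have hD0 : Da (x, y) = 0 := by
        simp [hDadef, Pi.add_apply, indicator_of_notMem hp]
      rw [hD0]
      exact (hasDerivAt_const x (0:ℝ)).congr_of_eventuallyEq hev0
  have hdb : ∀ p : ℝ × ℝ, HasDerivAt (fun s => b (p.1, s)) (Db p) p.2 := by
    rintro ⟨x, y⟩
    by_cases hp : (x, y) ∈ Ω
    · have hop : IsOpen {s : ℝ | (x, s) ∈ Ω} :=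
        hΩ.preimage (continuous_const.prodMk continuous_id)
      have hev : (fun s => b (x, s)) =ᶠ[nhds y]
          (fun s => Ht t (ψ (x, s)) * (w x * F2 (x, s))) := by
        filter_upwards [hop.mem_nhds hp] with s hs
        simp [hbdef, indicator_of_mem hs, hub]
      have hHts : HasDerivAt (fun s => Ht t (ψ (x, s))) (Htd t (ψ (x, y)) * F2 (x, y)) y := by
        have := (Ht_hasDerivAt ht (ψ (x, y))).comp y (hB2 (x, y) hp)
        simpa [Function.comp_def] using this
      have hprod : HasDerivAt (fun s => w x * F2 (x, s)) (w x * F22 (x, y)) y :=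
        (hB22 (x, y) hp).const_mul (w x)
      have hfull := hHts.mul hprod
      have hval : Db (x, y) = Htd t (ψ (x, y)) * F2 (x, y) * (w x * F2 (x, y)) +
          Ht t (ψ (x, y)) * (w x * F22 (x, y)) := by
        simp [hDbdef, Pi.add_apply, indicator_of_mem hp, hu3, hu4]
        ring
      rw [hval]
      exact hfull.congr_of_eventuallyEq hev
    · have hev0 : (fun s => b (x, s)) =ᶠ[nhds y] fun _ => 0 := by
        have htend : Tendsto (fun s : ℝ => (x, s)) (nhds y) (nhds (x, y)) :=
          ((continuous_const.prodMk continuous_id).tendsto y)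
        exact htend.eventually (gB.2.2 (x, y) hp)
      have hD0 : Db (x, y) = 0 := by
        simp [hDbdef, Pi.add_apply, indicator_of_notMem hp]
      rw [hD0]
      exact (hasDerivAt_const y (0:ℝ)).congr_of_eventuallyEq hev0
  -- support bound
  obtain ⟨r, hr⟩ := hΩb.subset_closedBall 0
  have hsupp : ∀ p : ℝ × ℝ, |r| + 1 ≤ |p.1| ∨ |r| + 1 ≤ |p.2| → a p = 0 ∧ b p = 0 := by
    intro p hp
    have hpn : p ∉ Ω := by
      intro hmem
      have := hr hmem
      rw [Metric.mem_closedBall, dist_zero_right, Prod.norm_def] at this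
      have h1 : |p.1| ≤ r := le_trans (le_max_left _ _) this
      have h2 : |p.2| ≤ r := le_trans (le_max_right _ _) this
      have hrr : r ≤ |r| := le_abs_self r
      rcases hp with hp | hp <;> linarith
    constructor <;> simp [hadef, hbdef, indicator_of_notMem hpn]
  have hdiv := divergence_zero a b Da Db hDacont hDbcont hda hdb (|r| + 1)
    (by positivity) hsupp
  -- rewrite the divergence identity as a set integral
  set G : ℝ × ℝ → ℝ := fun p => Ht t (ψ p) * u1 p + Htd t (ψ p) * u2 p +
      Ht t (ψ p) * u3 p + Htd t (ψ p) * u4 p with hGdef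
  have hindG : (fun p => Da p + Db p) = Ω.indicator G := by
    funext p
    by_cases hp : p ∈ Ω
    · simp [hDadef, hDbdef, hGdef, Pi.add_apply, indicator_of_mem hp]
      ring
    · simp [hDadef, hDbdef, Pi.add_apply, indicator_of_notMem hp]
  have hDaint : Integrable Da :=
    (g1.1.integrable_of_hasCompactSupport g1.2.1).add
      (g2.1.integrable_of_hasCompactSupport g2.2.1)
  have hDbint : Integrable Db :=
    (g3.1.integrable_of_hasCompactSupport g3.2.1).add
      (g4.1.integrable_of_hasCompactSupport g4.2.1)
  have hGint : IntegrableOn G Ω := by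
    rw [← integrable_indicator_iff hΩ.measurableSet, ← hindG]
    exact hDaint.add hDbint
  have hG0 : ∫ p in Ω, G p = 0 := by
    rw [← integral_indicator hΩ.measurableSet, ← hindG, hdiv]
  -- pointwise inequality on Ω
  have hptwise : ∀ p ∈ Ω,
      w p.1 * (p.1 - lam) * (Ht t (ψ p) * ψ p) ≤
        h^2 * G p + w p.1 * ((p.1 - m)/4) * (Ht t (ψ p) * ψ p) := by
    intro p hp
    have hxm : m < p.1 := hm p hp
    set d : ℝ := (p.1 - m) ^ ((1:ℝ)/2) with hd
    have hdnn : 0 ≤ d := Real.rpow_nonneg (by linarith) _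
    have hd2 : d ^ 2 = p.1 - m := by
      rw [hd, ← Real.rpow_natCast ((p.1 - m) ^ ((1:ℝ)/2)) 2, ← Real.rpow_mul (by linarith)]
      norm_num
    have hc : (0:ℝ) ≤ d / (2*h) := by positivity
    have hkey := quad_ineq (c := d/(2*h)) (X := F1 p) (Hs := Ht t (ψ p))
      (Hds := Htd t (ψ p)) (s := ψ p) hc (Htd_nonneg t (ψ p)) (Ht_key t (ψ p))
    have hF2nn : 0 ≤ Htd t (ψ p) * F2 p ^ 2 := mul_nonneg (Htd_nonneg t (ψ p)) (sq_nonneg _)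
    have hPDEp := hPDE' p hp
    have hexpand : h^2 * G p + w p.1 * ((p.1 - m)/4) * (Ht t (ψ p) * ψ p) -
        w p.1 * (p.1 - lam) * (Ht t (ψ p) * ψ p) =
        w p.1 * h^2 * (Htd t (ψ p) * (F1 p)^2 + 2 * (d/(2*h)) * Ht t (ψ p) * F1 p +
          (d/(2*h))^2 * (Ht t (ψ p) * ψ p)) + h^2 * (w p.1 * (Htd t (ψ p) * F2 p ^ 2)) := by
      rw [hGdef]
      simp only [hu1, hu2, hu3, hu4, hwd]
      rw [← hd]
      have hFF : F11 p = (p.1 - lam) * ψ p / h^2 - F22 p := by linarith [hPDEp]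
      rw [hFF, ← hd2]
      have hh2 : (h:ℝ) ≠ 0 := ne_of_gt hh
      field_simp
      ring
    have h1 : 0 ≤ w p.1 * h^2 * (Htd t (ψ p) * (F1 p)^2 + 2 * (d/(2*h)) * Ht t (ψ p) * F1 p +
          (d/(2*h))^2 * (Ht t (ψ p) * ψ p)) :=
      mul_nonneg (by positivity) (by linarith [hkey])
    have h2 : 0 ≤ h^2 * (w p.1 * (Htd t (ψ p) * F2 p ^ 2)) := by
      have := hwpos p.1
      positivity
    linarith [hexpand, h1, h2]
  -- integrability of both sides
  have hLint : IntegrableOn (fun p => w p.1 * (p.1 - lam) * (Ht t (ψ p) * ψ p)) Ω := by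
    have hucont : ContinuousOn (fun p : ℝ × ℝ => w p.1 * (p.1 - lam) * ψ p) Ω :=
      ((hwfst.continuousOn.mul (continuous_fst.sub continuous_const).continuousOn).mul hψcont)
    have gL := glue Ω hΩ hΩb ψ hψc hfr (Ht t) hHtcont t ht (fun s hs => Ht_zero hs)
      (fun p => w p.1 * (p.1 - lam) * ψ p) hucont
    have := (integrable_indicator_iff (μ := volume) hΩ.measurableSet).mp
      (gL.1.integrable_of_hasCompactSupport (μ := volume) gL.2.1)
    apply this.congr_fun ?_ hΩ.measurableSet
    intro p hp
    ring
  have hRterm : IntegrableOn (fun p => w p.1 * ((p.1 - m)/4) * (Ht t (ψ p) * ψ p)) Ω := by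
    have hucont : ContinuousOn (fun p : ℝ × ℝ => w p.1 * ((p.1 - m)/4) * ψ p) Ω :=
      ((hwfst.continuousOn.mul
        (((continuous_fst.sub continuous_const).div_const 4).continuousOn)).mul hψcont)
    have gR := glue Ω hΩ hΩb ψ hψc hfr (Ht t) hHtcont t ht (fun s hs => Ht_zero hs)
      (fun p => w p.1 * ((p.1 - m)/4) * ψ p) hucont
    have := (integrable_indicator_iff (μ := volume) hΩ.measurableSet).mp
      (gR.1.integrable_of_hasCompactSupport (μ := volume) gR.2.1)
    apply this.congr_fun ?_ hΩ.measurableSet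
    intro p hp
    ring
  have hRint : IntegrableOn
      (fun p => h^2 * G p + w p.1 * ((p.1 - m)/4) * (Ht t (ψ p) * ψ p)) Ω :=
    (hGint.const_mul (h^2)).add hRterm
  have hmono := MeasureTheory.setIntegral_mono_on hLint hRint hΩ.measurableSet hptwise
  have hfin : ∫ p in Ω, w p.1 * (p.1 - lam) * (Ht t (ψ p) * ψ p) ≤
      ∫ p in Ω, w p.1 * ((p.1 - m)/4) * (Ht t (ψ p) * ψ p) := by
    refine le_trans hmono (le_of_eq ?_)
    rw [integral_add (hGint.const_mul (h^2)) hRterm, MeasureTheory.integral_const_mul, hG0]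
    ring
  simpa only [hw] using hfin

end Core

set_option maxHeartbeats 1000000 in
/-- Agmon-type weighted L² inequality, obtained from `core` by letting `t → 0`. -/
lemma star (Ω : Set (ℝ × ℝ)) (hΩ : IsOpen Ω) (hΩb : IsBounded Ω)
    (ψ : ℝ × ℝ → ℝ) (h lam m : ℝ)
    (hsm : ContDiffOn ℝ (⊤ : ℕ∞) ψ Ω) (hψc : ContinuousOn ψ (closure Ω))
    (hfr : ∀ p ∈ frontier Ω, ψ p = 0)
    (hml : MemLp ψ 2 (volume.restrict Ω))
    (hPDE : ∀ p ∈ Ω,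
      -h ^ 2 * (deriv (fun x => deriv (fun x' => ψ (x', p.2)) x) p.1 +
                deriv (fun y => deriv (fun y' => ψ (p.1, y')) y) p.2) + p.1 * ψ p = lam * ψ p)
    (hh : 0 < h) (hm : ∀ p ∈ Ω, m < p.1) :
    ∫ p in Ω, Real.exp (2/3 * |p.1 - m| ^ ((3:ℝ)/2) / h) * (p.1 - lam) * ψ p ^ 2
      ≤ ∫ p in Ω, Real.exp (2/3 * |p.1 - m| ^ ((3:ℝ)/2) / h) * ((p.1 - m)/4) * ψ p ^ 2 := by
  classical
  set w : ℝ → ℝ := fun x => Real.exp (2/3 * |x - m| ^ ((3:ℝ)/2) / h) with hw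
  obtain ⟨r, hr⟩ := hΩb.subset_closedBall 0
  set R : ℝ := |r| with hR
  have hbd : ∀ p ∈ Ω, |p.1| ≤ R ∧ |p.2| ≤ R := by
    intro p hp
    have := hr hp
    rw [Metric.mem_closedBall, dist_zero_right, Prod.norm_def] at this
    constructor
    · exact le_trans (le_max_left _ _) (le_trans this (le_abs_self r))
    · exact le_trans (le_max_right _ _) (le_trans this (le_abs_self r))
  have hwb : ∀ p ∈ Ω, w p.1 ≤ Real.exp (2/3 * (R + |m|) ^ ((3:ℝ)/2) / h) := by
    intro p hp
    rw [hw]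
    simp only
    apply Real.exp_le_exp.mpr
    apply (div_le_div_iff_of_pos_right hh).mpr
    apply mul_le_mul_of_nonneg_left ?_ (by norm_num)
    apply Real.rpow_le_rpow (abs_nonneg _) ?_ (by norm_num)
    calc |p.1 - m| ≤ |p.1| + |m| := abs_sub _ _
      _ ≤ R + |m| := by linarith [(hbd p hp).1]
  set W : ℝ := Real.exp (2/3 * (R + |m|) ^ ((3:ℝ)/2) / h) with hW
  have hWpos : 0 < W := Real.exp_pos _
  have hsq : Integrable (fun p => ψ p ^ 2) (volume.restrict Ω) := hml.integrable_sq
  have hψm : AEStronglyMeasurable ψ (volume.restrict Ω) := hml.aestronglyMeasurable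
  have hwcont : Continuous w := by
    rw [hw]
    apply Real.continuous_exp.comp
    apply Continuous.div_const
    apply Continuous.mul continuous_const
    rw [continuous_iff_continuousAt]
    intro x
    exact (Real.continuousAt_rpow_const _ _ (Or.inr (by norm_num))).comp
      ((continuous_abs.comp (continuous_id.sub continuous_const)).continuousAt)
  have hHtcont : ∀ t : ℝ, 0 < t → Continuous (Ht t) := by
    intro t ht
    rw [continuous_iff_continuousAt]
    exact fun s => (Ht_hasDerivAt ht s).continuousAt
  -- the two coefficient functions
  set c1 : ℝ × ℝ → ℝ := fun p => w p.1 * (p.1 - lam) with hc1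
  set c2 : ℝ × ℝ → ℝ := fun p => w p.1 * ((p.1 - m)/4) with hc2
  have hc1cont : Continuous c1 :=
    (hwcont.comp continuous_fst).mul (continuous_fst.sub continuous_const)
  have hc2cont : Continuous c2 :=
    (hwcont.comp continuous_fst).mul ((continuous_fst.sub continuous_const).div_const 4)
  have hc1bd : ∀ p ∈ Ω, |c1 p| ≤ W * (R + |lam|) := by
    intro p hp
    rw [hc1]
    simp only [abs_mul]
    apply mul_le_mul (by rw [abs_of_pos (Real.exp_pos _)]; exact hwb p hp)
      ?_ (abs_nonneg _) hWpos.le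
    calc |p.1 - lam| ≤ |p.1| + |lam| := abs_sub _ _
      _ ≤ R + |lam| := by linarith [(hbd p hp).1]
  have hc2bd : ∀ p ∈ Ω, |c2 p| ≤ W * (R + |m|) := by
    intro p hp
    rw [hc2]
    simp only [abs_mul]
    apply mul_le_mul (by rw [abs_of_pos (Real.exp_pos _)]; exact hwb p hp)
      ?_ (abs_nonneg _) hWpos.le
    rw [abs_div]
    calc |p.1 - m| / |(4:ℝ)| ≤ |p.1 - m| := by
          rw [abs_of_pos (by norm_num : (0:ℝ) < 4)]
          linarith [abs_nonneg (p.1 - m)]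
      _ ≤ |p.1| + |m| := abs_sub _ _
      _ ≤ R + |m| := by linarith [(hbd p hp).1]
  -- dominated convergence on both sides
  have hDCT : ∀ (c : ℝ × ℝ → ℝ), Continuous c → (K : ℝ) → (∀ p ∈ Ω, |c p| ≤ K) →
      Tendsto (fun n : ℕ => ∫ p in Ω, c p * (Ht ((n+1:ℝ)⁻¹) (ψ p) * ψ p)) atTop
        (nhds (∫ p in Ω, c p * ψ p ^ 2)) := by
    intro c hc K hK
    apply MeasureTheory.tendsto_integral_of_dominated_convergence
      (bound := fun p => K * ψ p ^ 2)
    · intro n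
      apply AEStronglyMeasurable.mul (hc.aestronglyMeasurable)
      apply AEStronglyMeasurable.mul ?_ hψm
      have hpos : (0:ℝ) < (n+1:ℝ)⁻¹ := by positivity
      exact (hHtcont _ hpos).comp_aestronglyMeasurable hψm
    · exact hsq.const_mul K
    · intro n
      rw [ae_restrict_iff' hΩ.measurableSet]
      apply Filter.Eventually.of_forall
      intro p hp
      have h1 : 0 ≤ Ht ((n+1:ℝ)⁻¹) (ψ p) * ψ p := Ht_mul_self_nonneg _ _
      have h2 : Ht ((n+1:ℝ)⁻¹) (ψ p) * ψ p ≤ ψ p ^ 2 := Ht_mul_self_le _ _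
      rw [Real.norm_eq_abs, abs_mul]
      apply mul_le_mul (hK p hp) ?_ (abs_nonneg _)
        (le_trans (abs_nonneg _) (hK p hp))
      rw [abs_of_nonneg h1]
      exact h2
    · apply Filter.Eventually.of_forall
      intro p
      exact (Ht_tendsto (ψ p)).const_mul (c p)
  have hL := hDCT c1 hc1cont (W * (R + |lam|)) hc1bd
  have hR2 := hDCT c2 hc2cont (W * (R + |m|)) hc2bd
  have hineq : ∀ n : ℕ, ∫ p in Ω, c1 p * (Ht ((n+1:ℝ)⁻¹) (ψ p) * ψ p) ≤
      ∫ p in Ω, c2 p * (Ht ((n+1:ℝ)⁻¹) (ψ p) * ψ p) := by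
    intro n
    have hpos : (0:ℝ) < (n+1:ℝ)⁻¹ := by positivity
    have := core Ω ψ h lam m ((n+1:ℝ)⁻¹) hΩ hΩb hsm hψc hfr hPDE hh hpos hm
    simpa only [hc1, hc2, hw, mul_assoc] using this
  have := le_of_tendsto_of_tendsto' hL hR2 hineq
  simpa only [hc1, hc2, hw, mul_assoc] using this

end AuxAgmon

open Filter Set Bornology in
set_option maxHeartbeats 1000000 in
/-- Agmon-type eigenfunction decay: for each `M > 0` there exist `ε, C, h₀ > 0` such that
for all `h ∈ (0,h₀)`, every eigenfunction `ψ` of the Dirichlet realization of `−h²Δ + x`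
on `Ω` with eigenvalue `λ ≤ x_min + M h^(2/3)` satisfies
`∫_Ω e^{ε|x − x_min|^{3/2}/h} |ψ|² ≤ C ‖ψ‖²`. -/
theorem stmt_6 (Ω : Set (ℝ × ℝ)) (hΩ : IsOpen Ω) (hΩb : Bornology.IsBounded Ω)
    (hne : Ω.Nonempty) (hconn : IsConnected Ω) (M : ℝ) (hM : 0 < M) :
    ∃ ε > 0, ∃ C > 0, ∃ h₀ > 0, ∀ h ∈ Set.Ioo (0 : ℝ) h₀, ∀ lam : ℝ, ∀ ψ : ℝ × ℝ → ℝ,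
      IsStarkEigen h lam Ω ψ →
      lam ≤ sInf (Prod.fst '' Ω) + M * h ^ ((2 : ℝ) / 3) →
      ∫ p in Ω, Real.exp (ε * |p.1 - sInf (Prod.fst '' Ω)| ^ ((3 : ℝ) / 2) / h) * (ψ p) ^ 2
        ≤ C * ∫ p in Ω, (ψ p) ^ 2 := by
  classical
  set m : ℝ := sInf (Prod.fst '' Ω) with hmdef
  set CN : ℝ := Real.exp (16/3 * M ^ ((3:ℝ)/2)) with hCNdef
  have hCNpos : 0 < CN := Real.exp_pos _
  refine ⟨2/3, by norm_num, 3 * CN, by positivity, 1, one_pos, ?_⟩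
  rintro h ⟨hh0, hh1⟩ lam ψ hEig hlam
  obtain ⟨hne', hsm, hψc, hfr, hml, hPDE⟩ := hEig
  obtain ⟨r, hr⟩ := hΩb.subset_closedBall 0
  have hbdd : BddBelow (Prod.fst '' Ω) := by
    refine ⟨-|r|, ?_⟩
    rintro x ⟨p, hp, rfl⟩
    have hball := hr hp
    rw [Metric.mem_closedBall, dist_zero_right, Prod.norm_def] at hball
    have h1 : |p.1| ≤ |r| := le_trans (le_max_left _ _) (le_trans hball (le_abs_self r))
    linarith [(abs_le.mp h1).1]
  have hm : ∀ p ∈ Ω, m < p.1 := by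
    intro p hp
    obtain ⟨δ, hδ, hballs⟩ := Metric.isOpen_iff.mp hΩ p hp
    have hq : ((p.1 - δ/2, p.2) : ℝ × ℝ) ∈ Ω := by
      apply hballs
      rw [Metric.mem_ball, Prod.dist_eq]
      have h1 : dist (p.1 - δ/2) p.1 = δ/2 := by
        rw [Real.dist_eq]
        rw [abs_of_nonpos (by linarith)]
        ring
      have h2 : dist p.2 p.2 = 0 := dist_self _
      rw [h1, h2]
      simp only [max_eq_left (by linarith : (0:ℝ) ≤ δ/2)]
      linarith
    have hle : m ≤ p.1 - δ/2 := csInf_le hbdd ⟨_, hq, rfl⟩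
    linarith
  -- weight
  set w : ℝ → ℝ := fun x => Real.exp (2/3 * |x - m| ^ ((3:ℝ)/2) / h) with hwdef
  have hwpos : ∀ x, 0 < w x := fun x => Real.exp_pos _
  have hwcont : Continuous w := by
    rw [hwdef]
    apply Real.continuous_exp.comp
    apply Continuous.div_const
    apply Continuous.mul continuous_const
    rw [continuous_iff_continuousAt]
    intro x
    exact (Real.continuousAt_rpow_const _ _ (Or.inr (by norm_num))).comp
      ((continuous_abs.comp (continuous_id.sub continuous_const)).continuousAt)
  set τ : ℝ := M * h ^ ((2:ℝ)/3) with hτdef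
  have hτpos : 0 < τ := by
    have := Real.rpow_pos_of_pos hh0 ((2:ℝ)/3)
    positivity
  have hlam' : lam ≤ m + τ := hlam
  -- coefficient functions
  set c1 : ℝ × ℝ → ℝ := fun p => w p.1 * (p.1 - lam) with hc1
  set c2 : ℝ × ℝ → ℝ := fun p => w p.1 * ((p.1 - m)/4) with hc2
  set c3 : ℝ × ℝ → ℝ := fun p => w p.1 * (3/4 * (p.1 - m) - τ) with hc3
  have hc1cont : Continuous c1 :=
    (hwcont.comp continuous_fst).mul (continuous_fst.sub continuous_const)
  have hc2cont : Continuous c2 :=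
    (hwcont.comp continuous_fst).mul ((continuous_fst.sub continuous_const).div_const 4)
  have hc3cont : Continuous c3 :=
    (hwcont.comp continuous_fst).mul
      ((continuous_const.mul (continuous_fst.sub continuous_const)).sub continuous_const)
  -- boundedness of coefficients on Ω
  have hbd1 : ∀ p ∈ Ω, |p.1| ≤ |r| := by
    intro p hp
    have hball := hr hp
    rw [Metric.mem_closedBall, dist_zero_right, Prod.norm_def] at hball
    exact le_trans (le_max_left _ _) (le_trans hball (le_abs_self r))
  have hwb : ∀ p ∈ Ω, w p.1 ≤ Real.exp (2/3 * (|r| + |m|) ^ ((3:ℝ)/2) / h) := by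
    intro p hp
    rw [hwdef]
    simp only
    apply Real.exp_le_exp.mpr
    apply (div_le_div_iff_of_pos_right hh0).mpr
    apply mul_le_mul_of_nonneg_left ?_ (by norm_num)
    apply Real.rpow_le_rpow (abs_nonneg _) ?_ (by norm_num)
    calc |p.1 - m| ≤ |p.1| + |m| := abs_sub _ _
      _ ≤ |r| + |m| := by linarith [hbd1 p hp]
  have hboundedc : ∀ (c : ℝ × ℝ → ℝ), (∃ K1, ∀ p ∈ Ω, |c p| ≤ K1) → True := fun _ _ => trivial
  have hWpos : (0:ℝ) < Real.exp (2/3 * (|r| + |m|) ^ ((3:ℝ)/2) / h) := Real.exp_pos _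
  have hcbd : ∀ (g : ℝ → ℝ), Continuous g → ∃ K, ∀ p ∈ Ω, |w p.1 * g p.1| ≤ K := by
    intro g hg
    obtain ⟨K0, hK0⟩ := (isCompact_Icc (a := -|r|) (b := |r|)).exists_bound_of_continuousOn
      hg.continuousOn
    refine ⟨Real.exp (2/3 * (|r| + |m|) ^ ((3:ℝ)/2) / h) * (|K0| + 1), ?_⟩
    intro p hp
    rw [abs_mul]
    apply mul_le_mul (by rw [abs_of_pos (hwpos p.1)]; exact hwb p hp) ?_ (abs_nonneg _)
      hWpos.le
    have hmem : p.1 ∈ Icc (-|r|) (|r|) := by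
      have := hbd1 p hp
      exact ⟨by linarith [(abs_le.mp this).1], (abs_le.mp this).2⟩
    have := hK0 p.1 hmem
    rw [Real.norm_eq_abs] at this
    linarith [le_abs_self K0, abs_nonneg K0]
  -- integrability
  have hsq : Integrable (fun p => ψ p ^ 2) (volume.restrict Ω) := hml.integrable_sq
  have hIB : ∀ (c : ℝ × ℝ → ℝ), Continuous c → (∃ K, ∀ p ∈ Ω, |c p| ≤ K) →
      Integrable (fun p => c p * ψ p ^ 2) (volume.restrict Ω) := by
    rintro c hc ⟨K, hK⟩
    apply Integrable.bdd_mul (c := K) hsq hc.aestronglyMeasurable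
    rw [ae_restrict_iff' hΩ.measurableSet]
    exact Filter.Eventually.of_forall
      (fun p hp => by rw [Real.norm_eq_abs]; exact hK p hp)
  have hI1 : Integrable (fun p => c1 p * ψ p ^ 2) (volume.restrict Ω) := by
    apply hIB c1 hc1cont
    have := hcbd (fun x => x - lam) (continuous_id.sub continuous_const)
    simpa [hc1] using this
  have hI2 : Integrable (fun p => c2 p * ψ p ^ 2) (volume.restrict Ω) := by
    apply hIB c2 hc2cont
    have := hcbd (fun x => (x - m)/4) ((continuous_id.sub continuous_const).div_const 4)
    simpa [hc2] using this
  have hI3 : Integrable (fun p => c3 p * ψ p ^ 2) (volume.restrict Ω) := by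
    apply hIB c3 hc3cont
    have := hcbd (fun x => 3/4 * (x - m) - τ)
      ((continuous_const.mul (continuous_id.sub continuous_const)).sub continuous_const)
    simpa [hc3] using this
  have hI4 : Integrable (fun p => w p.1 * ψ p ^ 2) (volume.restrict Ω) := by
    apply hIB (fun p => w p.1) (hwcont.comp continuous_fst)
    have := hcbd (fun _ => 1) continuous_const
    simpa using this
  -- main inequality from star
  have hstar := star Ω hΩ hΩb ψ h lam m hsm hψc hfr hml hPDE hh0 hm
  have hstar' : ∫ p in Ω, c1 p * ψ p ^ 2 ≤ ∫ p in Ω, c2 p * ψ p ^ 2 := by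
    simpa only [hc1, hc2, hwdef, mul_assoc] using hstar
  -- step 1
  have hpt1 : ∀ p ∈ Ω, c3 p * ψ p ^ 2 ≤ c1 p * ψ p ^ 2 - c2 p * ψ p ^ 2 := by
    intro p hp
    rw [hc1, hc2, hc3]
    simp only
    have hwψ : 0 ≤ w p.1 * ψ p ^ 2 := mul_nonneg (hwpos p.1).le (sq_nonneg _)
    nlinarith [hwψ, hlam']
  have hI12 : Integrable (fun p => c1 p * ψ p ^ 2 - c2 p * ψ p ^ 2)
      (volume.restrict Ω) := hI1.sub hI2
  have hstep1 : ∫ p in Ω, c3 p * ψ p ^ 2 ≤ 0 := by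
    have hst := MeasureTheory.setIntegral_mono_on hI3 hI12 hΩ.measurableSet hpt1
    have hsub : ∫ p in Ω, (c1 p * ψ p ^ 2 - c2 p * ψ p ^ 2) =
        (∫ p in Ω, c1 p * ψ p ^ 2) - ∫ p in Ω, c2 p * ψ p ^ 2 := integral_sub hI1 hI2
    rw [hsub] at hst
    linarith [hstar']
  -- step 2 : pointwise coefficient bound
  have h4τ : (4*τ) ^ ((3:ℝ)/2) = 8 * M ^ ((3:ℝ)/2) * h := by
    have e2 : (h ^ ((2:ℝ)/3)) ^ ((3:ℝ)/2) = h := by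
      rw [← Real.rpow_mul hh0.le, show (2:ℝ)/3*((3:ℝ)/2) = 1 by norm_num, Real.rpow_one]
    have e1 : (4:ℝ) ^ ((3:ℝ)/2) = 8 := by
      rw [show (4:ℝ) = (2:ℝ)^(2:ℕ) by norm_num, ← Real.rpow_natCast (2:ℝ) 2,
        ← Real.rpow_mul (by norm_num : (0:ℝ) ≤ 2)]
      rw [show (2:ℕ)*((3:ℝ)/2) = ((3:ℕ):ℝ) by push_cast; ring, Real.rpow_natCast]
      norm_num
    rw [hτdef, show 4 * (M * h ^ ((2:ℝ)/3)) = (4*M) * h ^ ((2:ℝ)/3) by ring,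
      Real.mul_rpow (by positivity) (by positivity),
      Real.mul_rpow (by norm_num) hM.le, e1, e2]
  have hwCN : ∀ ρ : ℝ, 0 ≤ ρ → ρ ≤ 4*τ → Real.exp (2/3 * ρ ^ ((3:ℝ)/2) / h) ≤ CN := by
    intro ρ h0 h4
    rw [hCNdef]
    apply Real.exp_le_exp.mpr
    have hbig : ρ ^ ((3:ℝ)/2) ≤ (4*τ) ^ ((3:ℝ)/2) := Real.rpow_le_rpow h0 h4 (by norm_num)
    rw [h4τ] at hbig
    rw [div_le_iff₀ hh0]
    nlinarith [hbig]
  have hpt2 : ∀ p ∈ Ω, τ/2 * (w p.1 * ψ p ^ 2) ≤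
      c3 p * ψ p ^ 2 + (3/2 * τ * CN) * ψ p ^ 2 := by
    intro p hp
    have hρ0 : 0 ≤ p.1 - m := sub_nonneg.mpr (hm p hp).le
    have hψ2 : 0 ≤ ψ p ^ 2 := sq_nonneg _
    have hcoef : τ/2 * w p.1 ≤ (3/4 * (p.1 - m) - τ) * w p.1 + 3/2 * τ * CN := by
      rcases le_or_gt (4*τ) (p.1 - m) with hcase | hcase
      · have h1 : 0 ≤ (3/4 * (p.1 - m) - τ - τ/2) * w p.1 :=
          mul_nonneg (by linarith) (hwpos p.1).le
        nlinarith [mul_pos hτpos hCNpos]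
      · have hwle : w p.1 ≤ CN := by
          rw [hwdef]
          simp only
          rw [abs_of_nonneg hρ0]
          exact hwCN _ hρ0 hcase.le
        have h2 : (-τ) * w p.1 ≤ (3/4 * (p.1 - m) - τ) * w p.1 := by
          apply mul_le_mul_of_nonneg_right ?_ (hwpos p.1).le
          linarith
        have h3 : τ * w p.1 ≤ τ * CN := mul_le_mul_of_nonneg_left hwle hτpos.le
        nlinarith
    calc τ/2 * (w p.1 * ψ p ^ 2) = (τ/2 * w p.1) * ψ p ^ 2 := by ring
      _ ≤ ((3/4 * (p.1 - m) - τ) * w p.1 + 3/2 * τ * CN) * ψ p ^ 2 :=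
          mul_le_mul_of_nonneg_right hcoef hψ2
      _ = c3 p * ψ p ^ 2 + (3/2 * τ * CN) * ψ p ^ 2 := by rw [hc3]; ring
  have hIR : Integrable (fun p => c3 p * ψ p ^ 2 + (3/2 * τ * CN) * ψ p ^ 2)
      (volume.restrict Ω) := hI3.add (hsq.const_mul _)
  have hIL : Integrable (fun p => τ/2 * (w p.1 * ψ p ^ 2)) (volume.restrict Ω) :=
    hI4.const_mul _
  have hstep3 := MeasureTheory.setIntegral_mono_on hIL hIR hΩ.measurableSet hpt2
  rw [MeasureTheory.integral_const_mul] at hstep3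
  have hsplit : ∫ p in Ω, (c3 p * ψ p ^ 2 + (3/2 * τ * CN) * ψ p ^ 2) =
      (∫ p in Ω, c3 p * ψ p ^ 2) + (3/2 * τ * CN) * ∫ p in Ω, ψ p ^ 2 := by
    rw [integral_add hI3 (hsq.const_mul _), MeasureTheory.integral_const_mul]
  rw [hsplit] at hstep3
  have hψint0 : 0 ≤ ∫ p in Ω, ψ p ^ 2 :=
    integral_nonneg (fun p => sq_nonneg _)
  have hfinal : ∫ p in Ω, w p.1 * ψ p ^ 2 ≤ 3 * CN * ∫ p in Ω, ψ p ^ 2 := by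
    have hτ2 : 0 < τ/2 := by linarith
    have hkey2 : τ/2 * (∫ p in Ω, w p.1 * ψ p ^ 2) ≤
        τ/2 * (3 * CN * ∫ p in Ω, ψ p ^ 2) := by
      have hre : τ/2 * (3 * CN * ∫ p in Ω, ψ p ^ 2) =
          (3/2 * τ * CN) * ∫ p in Ω, ψ p ^ 2 := by ring
      rw [hre]
      linarith [hstep3, hstep1]
    exact le_of_mul_le_mul_left hkey2 hτ2
  simpa only [hwdef] using hfinal
end

section
/- Exponential moments of the rescaled Airy function: with a_h(t) = h^{−1/3} Ai(h^{−2/3}t − z₁), Ai being L²(ℝ₊)-normalized after shifting by its first zero −z₁, there exist ε, c > 0 such that ∫₀^∞ e^{ε t^{3/2}/h} |a_h(t)|² dt ≤ c for all h ∈ (0,1]. -/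
open MeasureTheory

open Filter Set Real

lemma airy_sub_lemma (u : ℝ → ℝ) (hu : ContDiff ℝ (⊤ : ℕ∞) u)
    (hODE : ∀ x : ℝ, deriv (deriv u) x = x * u x)
    (hdecay : Filter.Tendsto u Filter.atTop (nhds 0))
    (hpos : ∀ x, 0 ≤ x → 0 < u x) :
    ∀ x, 0 ≤ x → u x ≤ u 0 * Real.exp (-(x ^ ((3:ℝ)/2)) / 4) := by
  have hd1 : Differentiable ℝ u := hu.differentiable (by simp)
  have huinf : ContDiff ℝ ((⊤:ℕ∞) : WithTop ℕ∞) u := hu.of_le (mod_cast le_top)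
  have hu' : ContDiff ℝ ((⊤:ℕ∞) : WithTop ℕ∞) (deriv u) := (contDiff_infty_iff_deriv.mp huinf).2
  have hd2 : Differentiable ℝ (deriv u) := hu'.differentiable (by simp)
  -- deriv u monotone on Ici 0
  have hmono' : MonotoneOn (deriv u) (Set.Ici 0) := by
    apply monotoneOn_of_deriv_nonneg (convex_Ici 0) hd2.continuous.continuousOn
      hd2.differentiableOn
    intro x hx
    rw [interior_Ici] at hx
    rw [hODE x]
    exact mul_nonneg (le_of_lt hx) (hpos x (le_of_lt hx)).le
  -- deriv u ≤ 0 on Ici 0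
  have hd_nonpos : ∀ a : ℝ, 0 ≤ a → deriv u a ≤ 0 := by
    intro a ha
    by_contra hcon
    push_neg at hcon
    have key : ∀ x, a ≤ x → u a + deriv u a * (x - a) ≤ u x := by
      have hφ : MonotoneOn (fun x => u x - deriv u a * x) (Set.Ici a) := by
        have hφd : Differentiable ℝ (fun x => u x - deriv u a * x) :=
          hd1.sub (differentiable_id.const_mul _)
        apply monotoneOn_of_deriv_nonneg (convex_Ici a)
          hφd.continuous.continuousOn hφd.differentiableOn
        intro x hx
        rw [interior_Ici] at hx
        have hder : HasDerivAt (fun x => u x - deriv u a * x) (deriv u x - deriv u a * 1) x :=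
          ((hd1 x).hasDerivAt).sub ((hasDerivAt_id x).const_mul (deriv u a))
        rw [hder.deriv, mul_one, sub_nonneg]
        exact hmono' ha (le_trans ha hx.le) hx.le
      intro x hx
      have := hφ (Set.self_mem_Ici) (by exact hx) hx
      simp only at this
      nlinarith
    have h1 : Filter.Tendsto (fun x => u a + deriv u a * (x - a)) Filter.atTop Filter.atTop := by
      apply Filter.tendsto_atTop_add_const_left
      apply Filter.Tendsto.const_mul_atTop hcon
      exact Filter.tendsto_atTop_add_const_right _ _ Filter.tendsto_id
    have h2 : Filter.Tendsto u Filter.atTop Filter.atTop :=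
      Filter.tendsto_atTop_mono' _ ((Filter.eventually_ge_atTop a).mono key) h1
    exact not_tendsto_atTop_of_tendsto_nhds hdecay h2
  -- u antitone on Ici 0
  have hanti : AntitoneOn u (Set.Ici 0) := by
    apply antitoneOn_of_deriv_nonpos (convex_Ici 0) hd1.continuous.continuousOn
      hd1.differentiableOn
    intro x hx
    rw [interior_Ici] at hx
    exact hd_nonpos x hx.le
  -- deriv u → 0
  have hd_tendsto : Filter.Tendsto (deriv u) Filter.atTop (nhds 0) := by
    have hlow : ∀ x : ℝ, 1 ≤ x → u x - u (x - 1) ≤ deriv u x := by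
      intro x hx
      obtain ⟨c, hc, hceq⟩ := exists_hasDerivAt_eq_slope u (deriv u) (by linarith : x - 1 < x)
        hd1.continuous.continuousOn (fun y _ => (hd1 y).hasDerivAt)
      have hc0 : (0:ℝ) ≤ c := by
        have := hc.1; linarith
      have := hmono' (Set.mem_Ici.mpr hc0) (Set.mem_Ici.mpr (by linarith : (0:ℝ) ≤ x)) hc.2.le
      rw [hceq] at this
      have hx1 : x - (x - 1) = 1 := by ring
      rw [hx1, div_one] at this
      linarith
    have hg : Filter.Tendsto (fun x : ℝ => u x - u (x - 1)) Filter.atTop (nhds 0) := by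
      have : Filter.Tendsto (fun x : ℝ => u (x - 1)) Filter.atTop (nhds 0) :=
        hdecay.comp (Filter.tendsto_atTop_add_const_right _ _ Filter.tendsto_id)
      simpa using hdecay.sub this
    apply tendsto_of_tendsto_of_tendsto_of_le_of_le' hg tendsto_const_nhds
      ((Filter.eventually_ge_atTop (1:ℝ)).mono hlow)
      ((Filter.eventually_ge_atTop (1:ℝ)).mono (fun x hx => hd_nonpos x (by linarith)))
  -- energy estimate
  have henergy : ∀ x₀ : ℝ, 0 ≤ x₀ → ∀ x : ℝ, x₀ ≤ x →
      deriv u x ≤ -Real.sqrt x₀ * u x := by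
    intro x₀ hx₀ x hx
    set E : ℝ → ℝ := fun y => (deriv u y)^2 - x₀ * (u y)^2 with hE
    have hEderiv : ∀ y : ℝ, HasDerivAt E (2 * deriv u y * u y * (y - x₀)) y := by
      intro y
      have h1 : HasDerivAt (deriv u) (y * u y) y := by
        have := (hd2 y).hasDerivAt
        rwa [hODE y] at this
      have h2 : HasDerivAt u (deriv u y) y := (hd1 y).hasDerivAt
      have := ((h1.pow 2).sub ((h2.pow 2).const_mul x₀))
      refine this.congr_deriv ?_
      push_cast
      ring
    have hEanti : AntitoneOn E (Set.Ici x₀) := by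
      apply antitoneOn_of_deriv_nonpos (convex_Ici x₀)
        (fun y _ => ((hEderiv y).continuousAt).continuousWithinAt)
        (fun y _ => ((hEderiv y).differentiableAt).differentiableWithinAt)
      intro y hy
      rw [interior_Ici] at hy
      rw [(hEderiv y).deriv]
      have hy0 : (0:ℝ) ≤ y := le_trans hx₀ (le_of_lt hy)
      have h3 : deriv u y * u y ≤ 0 :=
        mul_nonpos_of_nonpos_of_nonneg (hd_nonpos y hy0) (hpos y hy0).le
      have h4 : (0:ℝ) ≤ y - x₀ := by simp only [Set.mem_Ioi] at hy; linarith
      have h5 : deriv u y * u y * (y - x₀) ≤ 0 := mul_nonpos_of_nonpos_of_nonneg h3 h4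
      nlinarith
    have hEtendsto : Filter.Tendsto E Filter.atTop (nhds 0) := by
      have : Filter.Tendsto E Filter.atTop (nhds ((0:ℝ)^2 - x₀ * (0:ℝ)^2)) :=
        (hd_tendsto.pow 2).sub ((hdecay.pow 2).const_mul x₀)
      simpa using this
    have hEnonneg : 0 ≤ E x := by
      apply le_of_tendsto hEtendsto
      filter_upwards [Filter.eventually_ge_atTop x] with y hy
      exact hEanti (Set.mem_Ici.mpr hx) (Set.mem_Ici.mpr (le_trans hx hy)) hy
    have hx0 : (0:ℝ) ≤ x := le_trans hx₀ hx
    have hux : 0 ≤ u x := (hpos x hx0).le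
    have hkey : x₀ * (u x)^2 ≤ (deriv u x)^2 := by
      simp only [hE] at hEnonneg; linarith
    have h1 : Real.sqrt (x₀ * (u x)^2) ≤ Real.sqrt ((deriv u x)^2) :=
      Real.sqrt_le_sqrt hkey
    rw [Real.sqrt_mul hx₀, Real.sqrt_sq hux, Real.sqrt_sq_eq_abs] at h1
    have habs : |deriv u x| = -(deriv u x) := abs_of_nonpos (hd_nonpos x hx0)
    rw [habs] at h1
    linarith
  -- Gronwall
  have hgron : ∀ x₀ : ℝ, 0 ≤ x₀ → ∀ x : ℝ, x₀ ≤ x →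
      u x ≤ u x₀ * Real.exp (Real.sqrt x₀ * (x₀ - x)) := by
    intro x₀ hx₀ x hx
    set g : ℝ → ℝ := fun y => u y * Real.exp (Real.sqrt x₀ * y) with hg
    have hgderiv : ∀ y : ℝ, HasDerivAt g
        ((deriv u y + Real.sqrt x₀ * u y) * Real.exp (Real.sqrt x₀ * y)) y := by
      intro y
      have h2 : HasDerivAt (fun y : ℝ => Real.exp (Real.sqrt x₀ * y))
          (Real.exp (Real.sqrt x₀ * y) * (Real.sqrt x₀ * 1)) y :=
        ((hasDerivAt_id y).const_mul (Real.sqrt x₀)).exp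
      have := ((hd1 y).hasDerivAt).mul h2
      refine this.congr_deriv ?_
      ring
    have hganti : AntitoneOn g (Set.Ici x₀) := by
      apply antitoneOn_of_deriv_nonpos (convex_Ici x₀)
        (fun y _ => ((hgderiv y).continuousAt).continuousWithinAt)
        (fun y _ => ((hgderiv y).differentiableAt).differentiableWithinAt)
      intro y hy
      rw [interior_Ici] at hy
      rw [(hgderiv y).deriv]
      apply mul_nonpos_of_nonpos_of_nonneg _ (Real.exp_pos _).le
      have := henergy x₀ hx₀ y hy.le
      linarith
    have hle := hganti (Set.self_mem_Ici) (Set.mem_Ici.mpr hx) hx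
    simp only [hg] at hle
    rw [show Real.sqrt x₀ * (x₀ - x) = Real.sqrt x₀ * x₀ - Real.sqrt x₀ * x by ring,
      Real.exp_sub, ← mul_div_assoc, le_div_iff₀ (Real.exp_pos _)]
    exact hle
  intro x hx
  have h2 : (0:ℝ) ≤ x/2 := by linarith
  have h := hgron (x/2) h2 x (by linarith)
  have hu2 : u (x/2) ≤ u 0 := hanti (Set.self_mem_Ici) (Set.mem_Ici.mpr h2) h2
  have hsq : Real.sqrt (x/2) * (x/2 - x) = -((x/2) ^ ((3:ℝ)/2)) := by
    have hh : (x/2) ^ ((1:ℝ)/2) * (x/2) ^ ((1:ℝ)) = (x/2) ^ ((3:ℝ)/2) := by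
      rw [← Real.rpow_add' h2 (by norm_num)]
      norm_num
    rw [Real.sqrt_eq_rpow, show x/2 - x = -(x/2) by ring, mul_neg, neg_inj,
      ← hh, Real.rpow_one]
  have hdiv : (x/2) ^ ((3:ℝ)/2) = x ^ ((3:ℝ)/2) / 2 ^ ((3:ℝ)/2) :=
    Real.div_rpow hx (by norm_num : (0:ℝ) ≤ 2) _
  have h2r : (2:ℝ) ^ ((3:ℝ)/2) ≤ 4 := by
    calc (2:ℝ) ^ ((3:ℝ)/2) ≤ 2 ^ (2:ℝ) :=
          Real.rpow_le_rpow_of_exponent_le one_le_two (by norm_num)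
      _ = 4 := by
          rw [show (2:ℝ) = ((2:ℕ):ℝ) from by norm_num, Real.rpow_natCast]
          norm_num
  have hexp : x ^ ((3:ℝ)/2) / 4 ≤ (x/2) ^ ((3:ℝ)/2) := by
    rw [hdiv]
    exact div_le_div_of_nonneg_left (Real.rpow_nonneg hx _)
      (Real.rpow_pos_of_pos two_pos _) h2r
  calc u x ≤ u (x/2) * Real.exp (Real.sqrt (x/2) * (x/2 - x)) := h
    _ ≤ u 0 * Real.exp (-(x ^ ((3:ℝ)/2)) / 4) := by
        apply mul_le_mul hu2 _ (Real.exp_pos _).le (hpos 0 le_rfl).le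
        rw [hsq]
        apply Real.exp_le_exp.mpr
        rw [neg_div]
        linarith


/-- Exponential moments of the rescaled Airy function: with
`a_h(t) = h^(−1/3) Ai(h^(−2/3) t − z₁)`, where `Ai` is the Airy function (characterized,
up to normalization, as a nontrivial solution of `y'' = x y` tending to `0` at `+∞`,
normalized so that `t ↦ Ai(t − z₁)` has `L²((0,∞))`-norm `1`) and `−z₁` its first
(largest) zero, there exist `ε, c > 0` such that
`∫₀^∞ e^{ε t^{3/2}/h} |a_h(t)|² dt ≤ c` for all `h ∈ (0,1]`. -/
theorem stmt_17 (Ai : ℝ → ℝ) (z₁ : ℝ)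
    (hAiC : ContDiff ℝ (⊤ : ℕ∞) Ai)
    (hAiODE : ∀ x : ℝ, deriv (deriv Ai) x = x * Ai x)
    (hAine : Ai ≠ 0)
    (hAidecay : Filter.Tendsto Ai Filter.atTop (nhds 0))
    (hz₁pos : 0 < z₁) (hz₁zero : Ai (-z₁) = 0) (hz₁max : ∀ x : ℝ, -z₁ < x → Ai x ≠ 0)
    (hnorm : ∫ t in Set.Ioi (0 : ℝ), (Ai (t - z₁)) ^ 2 = 1) :
    ∃ ε > 0, ∃ c > 0, ∀ h ∈ Set.Ioc (0 : ℝ) 1,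
      ∫ t in Set.Ioi (0 : ℝ), Real.exp (ε * t ^ ((3 : ℝ) / 2) / h) *
          (h ^ (-(1 : ℝ) / 3) * Ai (h ^ (-(2 : ℝ) / 3) * t - z₁)) ^ 2 ≤ c := by
  have hAid : Differentiable ℝ Ai := hAiC.differentiable (by simp)
  -- sign normalization
  set σ : ℝ := if 0 < Ai 0 then 1 else -1 with hσ
  set u : ℝ → ℝ := fun x => σ * Ai x with hudef
  have hAi0 : Ai 0 ≠ 0 := hz₁max 0 (by linarith)
  have hσsq : σ ^ 2 = 1 := by
    rw [hσ]; split <;> norm_num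
  have hu0 : 0 < u 0 := by
    rw [hudef]; simp only [hσ]
    split
    · simpa using by assumption
    · rename_i hn
      have : Ai 0 < 0 := lt_of_le_of_ne (not_lt.mp hn) hAi0
      nlinarith
  have huC : ContDiff ℝ (⊤ : ℕ∞) u := contDiff_const.mul hAiC
  have hderivu : deriv u = fun x => σ * deriv Ai x := by
    funext x
    exact deriv_const_mul σ (hAid x)
  have hAid2 : Differentiable ℝ (deriv Ai) := by
    have : ContDiff ℝ (((⊤:ℕ∞)) : WithTop ℕ∞) Ai := hAiC.of_le (mod_cast le_top)
    exact ((contDiff_infty_iff_deriv.mp this).2).differentiable (by simp)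
  have hODEu : ∀ x : ℝ, deriv (deriv u) x = x * u x := by
    intro x
    rw [hderivu, deriv_const_mul σ (hAid2 x), hAiODE]
    ring
  have hdecayu : Filter.Tendsto u Filter.atTop (nhds 0) := by
    simpa using hAidecay.const_mul σ
  have hupos : ∀ x, 0 ≤ x → 0 < u x := by
    intro x hx
    rcases lt_trichotomy (u x) 0 with hlt | heq | hgt
    · exfalso
      have hcont : ContinuousOn u (Set.uIcc 0 x) := huC.continuous.continuousOn
      have h0m : (0:ℝ) ∈ Set.uIcc (u 0) (u x) := by
        rw [Set.mem_uIcc]; right; exact ⟨hlt.le, hu0.le⟩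
      obtain ⟨ξ, hξ, hξ0⟩ := intermediate_value_uIcc hcont h0m
      have hξ0' : Ai ξ = 0 := by
        have : σ * Ai ξ = 0 := hξ0
        rcases mul_eq_zero.mp this with h | h
        · exfalso; rw [hσ] at h; revert h; split <;> norm_num
        · exact h
      have : -z₁ < ξ := by
        rw [Set.uIcc_of_le hx] at hξ
        have := hξ.1; linarith
      exact hz₁max ξ this hξ0'
    · exfalso
      have : Ai x = 0 := by
        have : σ * Ai x = 0 := heq
        rcases mul_eq_zero.mp this with h | h
        · exfalso; rw [hσ] at h; revert h; split <;> norm_num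
        · exact h
      exact hz₁max x (by linarith) this
    · exact hgt
  have key := airy_sub_lemma u huC hODEu hdecayu hupos
  have hAisq : ∀ x : ℝ, (Ai x) ^ 2 = (u x) ^ 2 := by
    intro x
    rw [hudef]
    simp only [mul_pow, hσsq, one_mul]
  set M : ℝ := u 0 with hM
  set S : ℝ := 2 * z₁ + 2 with hS
  obtain ⟨B, hB⟩ := (isCompact_Icc (a := -z₁) (b := S)).exists_bound_of_continuousOn
    hAiC.continuous.continuousOn
  have hBnn : 0 ≤ B := le_trans (norm_nonneg _) (hB (-z₁) (by constructor <;> [linarith; linarith]))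
  set K : ℝ := Real.exp (S ^ ((3:ℝ)/2) / 16) * B ^ 2 * Real.exp (S / 16) + M ^ 2 with hK
  set F : ℝ → ℝ := fun s => Real.exp (s ^ ((3:ℝ)/2) / 16) * (Ai (s - z₁)) ^ 2 with hF
  have hFnn : ∀ s : ℝ, 0 ≤ F s := fun s => mul_nonneg (Real.exp_pos _).le (sq_nonneg _)
  -- the key pointwise bound
  have hFbound : ∀ s ∈ Set.Ioi (0:ℝ), F s ≤ K * Real.exp (-(1/16) * s) := by
    intro s hs
    rw [Set.mem_Ioi] at hs
    rcases le_or_gt s S with hsS | hsS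
    · -- small s : compact bound
      have h1 : (Ai (s - z₁)) ^ 2 ≤ B ^ 2 := by
        have hmem : s - z₁ ∈ Set.Icc (-z₁) S := by constructor <;> linarith
        have := hB _ hmem
        rw [Real.norm_eq_abs] at this
        calc (Ai (s - z₁)) ^ 2 = |Ai (s - z₁)| ^ 2 := (sq_abs _).symm
          _ ≤ B ^ 2 := pow_le_pow_left₀ (abs_nonneg _) this 2
      have h2 : Real.exp (s ^ ((3:ℝ)/2) / 16) ≤ Real.exp (S ^ ((3:ℝ)/2) / 16) := by
        apply Real.exp_le_exp.mpr
        apply div_le_div_of_nonneg_right ?_ (by norm_num)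
        exact Real.rpow_le_rpow hs.le hsS (by norm_num)
      have h3 : Real.exp (-(S/16)) ≤ Real.exp (-(1/16) * s) := by
        apply Real.exp_le_exp.mpr; linarith
      calc F s ≤ Real.exp (S ^ ((3:ℝ)/2) / 16) * B ^ 2 :=
            mul_le_mul h2 h1 (sq_nonneg _) (Real.exp_pos _).le
        _ = Real.exp (S ^ ((3:ℝ)/2) / 16) * B ^ 2 * Real.exp (S/16) * Real.exp (-(S/16)) := by
            rw [mul_assoc _ (Real.exp (S/16)), ← Real.exp_add]
            norm_num
        _ ≤ Real.exp (S ^ ((3:ℝ)/2) / 16) * B ^ 2 * Real.exp (S/16) * Real.exp (-(1/16) * s) := by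
            apply mul_le_mul_of_nonneg_left h3
            positivity
        _ ≤ K * Real.exp (-(1/16) * s) := by
            apply mul_le_mul_of_nonneg_right _ (Real.exp_pos _).le
            rw [hK]
            nlinarith [sq_nonneg M]
    · -- large s : decay bound
      have hs2 : (0:ℝ) ≤ s - z₁ := by linarith
      have hx2 : s / 2 ≤ s - z₁ := by linarith
      have hk := key (s - z₁) hs2
      have hMnn : (0:ℝ) ≤ M := hu0.le
      have hrp : s ^ ((3:ℝ)/2) / 4 ≤ (s - z₁) ^ ((3:ℝ)/2) := by
        have e1 : (s/2) ^ ((3:ℝ)/2) ≤ (s - z₁) ^ ((3:ℝ)/2) :=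
          Real.rpow_le_rpow (by linarith) hx2 (by norm_num)
        have e2 : (s/2) ^ ((3:ℝ)/2) = s ^ ((3:ℝ)/2) / 2 ^ ((3:ℝ)/2) :=
          Real.div_rpow hs.le (by norm_num : (0:ℝ) ≤ 2) _
        have e3 : (2:ℝ) ^ ((3:ℝ)/2) ≤ 4 := by
          calc (2:ℝ) ^ ((3:ℝ)/2) ≤ 2 ^ (2:ℝ) :=
                Real.rpow_le_rpow_of_exponent_le one_le_two (by norm_num)
            _ = 4 := by
                rw [show (2:ℝ) = ((2:ℕ):ℝ) from by norm_num, Real.rpow_natCast]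
                norm_num
        have e4 : s ^ ((3:ℝ)/2) / 4 ≤ s ^ ((3:ℝ)/2) / 2 ^ ((3:ℝ)/2) :=
          div_le_div_of_nonneg_left (Real.rpow_nonneg hs.le _)
            (Real.rpow_pos_of_pos two_pos _) e3
        linarith
      have hu2 : (u (s - z₁)) ^ 2 ≤ M ^ 2 * Real.exp (-(s ^ ((3:ℝ)/2)) / 8) := by
        calc (u (s - z₁)) ^ 2 ≤ (M * Real.exp (-((s - z₁) ^ ((3:ℝ)/2)) / 4)) ^ 2 :=
              pow_le_pow_left₀ (hupos _ hs2).le hk 2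
          _ = M ^ 2 * Real.exp (-((s - z₁) ^ ((3:ℝ)/2)) / 4 + -((s - z₁) ^ ((3:ℝ)/2)) / 4) := by
              rw [mul_pow, sq (Real.exp _), ← Real.exp_add]
          _ ≤ M ^ 2 * Real.exp (-(s ^ ((3:ℝ)/2)) / 8) := by
              apply mul_le_mul_of_nonneg_left _ (sq_nonneg M)
              apply Real.exp_le_exp.mpr
              linarith
      have hs1 : (1:ℝ) ≤ s := by linarith
      have hs32 : s ≤ s ^ ((3:ℝ)/2) := by
        nth_rewrite 1 [show s = s ^ (1:ℝ) from (Real.rpow_one s).symm]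
        exact Real.rpow_le_rpow_of_exponent_le hs1 (by norm_num)
      calc F s = Real.exp (s ^ ((3:ℝ)/2) / 16) * (u (s - z₁)) ^ 2 := by rw [hF]; simp [hAisq]
        _ ≤ Real.exp (s ^ ((3:ℝ)/2) / 16) * (M ^ 2 * Real.exp (-(s ^ ((3:ℝ)/2)) / 8)) :=
            mul_le_mul_of_nonneg_left hu2 (Real.exp_pos _).le
        _ = M ^ 2 * Real.exp (s ^ ((3:ℝ)/2) / 16 + -(s ^ ((3:ℝ)/2)) / 8) := by
            rw [Real.exp_add]; ring
        _ ≤ M ^ 2 * Real.exp (-(1/16) * s) := by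
            apply mul_le_mul_of_nonneg_left _ (sq_nonneg M)
            apply Real.exp_le_exp.mpr
            linarith
        _ ≤ K * Real.exp (-(1/16) * s) := by
            apply mul_le_mul_of_nonneg_right _ (Real.exp_pos _).le
            rw [hK]
            nlinarith [mul_nonneg (mul_nonneg (Real.exp_pos (S ^ ((3:ℝ)/2) / 16)).le
              (sq_nonneg B)) (Real.exp_pos (S/16)).le]
  -- integrability
  have hFcont : ContinuousOn F (Set.Ioi (0:ℝ)) := by
    apply ContinuousOn.mul
    · apply Real.continuous_exp.comp_continuousOn
      apply ContinuousOn.div_const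
      intro s hs
      exact (Real.continuousAt_rpow_const s _ (Or.inl (ne_of_gt hs))).continuousWithinAt
    · exact ((hAiC.continuous.comp (continuous_id.sub continuous_const)).pow 2).continuousOn
  have hgint : IntegrableOn (fun s => K * Real.exp (-(1/16) * s)) (Set.Ioi (0:ℝ)) :=
    (exp_neg_integrableOn_Ioi 0 (by norm_num : (0:ℝ) < 1/16)).const_mul K
  have hFint : IntegrableOn F (Set.Ioi (0:ℝ)) := by
    apply Integrable.mono' hgint (hFcont.aestronglyMeasurable measurableSet_Ioi)
    rw [ae_restrict_iff' measurableSet_Ioi]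
    refine MeasureTheory.ae_of_all _ (fun s hs => ?_)
    rw [Real.norm_eq_abs, abs_of_nonneg (hFnn s)]
    exact hFbound s hs
  have hAint : IntegrableOn (fun s => (Ai (s - z₁)) ^ 2) (Set.Ioi (0:ℝ)) := by
    apply Integrable.mono' hFint
      (Continuous.aestronglyMeasurable
        ((hAiC.continuous.comp (continuous_id.sub continuous_const)).pow 2))
    rw [ae_restrict_iff' measurableSet_Ioi]
    refine MeasureTheory.ae_of_all _ (fun s hs => ?_)
    rw [Set.mem_Ioi] at hs
    rw [Real.norm_eq_abs, abs_of_nonneg (sq_nonneg _)]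
    show (Ai (s - z₁)) ^ 2 ≤ Real.exp (s ^ ((3:ℝ)/2) / 16) * (Ai (s - z₁)) ^ 2
    nth_rewrite 1 [show (Ai (s - z₁)) ^ 2 = 1 * (Ai (s - z₁)) ^ 2 from (one_mul _).symm]
    exact mul_le_mul_of_nonneg_right
      (Real.one_le_exp (div_nonneg (Real.rpow_nonneg hs.le _) (by norm_num)))
      (sq_nonneg _)
  set c : ℝ := ∫ s in Set.Ioi (0:ℝ), F s with hc
  have hc1 : (1:ℝ) ≤ c := by
    rw [← hnorm, hc]
    apply setIntegral_mono_on hAint hFint measurableSet_Ioi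
    intro s hs
    rw [Set.mem_Ioi] at hs
    show (Ai (s - z₁)) ^ 2 ≤ Real.exp (s ^ ((3:ℝ)/2) / 16) * (Ai (s - z₁)) ^ 2
    nth_rewrite 1 [show (Ai (s - z₁)) ^ 2 = 1 * (Ai (s - z₁)) ^ 2 from (one_mul _).symm]
    exact mul_le_mul_of_nonneg_right
      (Real.one_le_exp (div_nonneg (Real.rpow_nonneg hs.le _) (by norm_num)))
      (sq_nonneg _)
  refine ⟨1/16, by norm_num, c, by linarith, ?_⟩
  intro h hh
  have hh0 : 0 < h := hh.1
  have hb : 0 < h ^ (-(2:ℝ)/3) := Real.rpow_pos_of_pos hh0 _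
  have heq : Set.EqOn
      (fun t => Real.exp (1/16 * t ^ ((3:ℝ)/2) / h) *
        (h ^ (-(1:ℝ)/3) * Ai (h ^ (-(2:ℝ)/3) * t - z₁)) ^ 2)
      (fun t => h ^ (-(2:ℝ)/3) * F (h ^ (-(2:ℝ)/3) * t)) (Set.Ioi (0:ℝ)) := by
    intro t ht
    rw [Set.mem_Ioi] at ht
    have e1 : (h ^ (-(1:ℝ)/3)) ^ 2 = h ^ (-(2:ℝ)/3) := by
      rw [sq, ← Real.rpow_add hh0]; norm_num
    have e2 : (h ^ (-(2:ℝ)/3) * t) ^ ((3:ℝ)/2) = h⁻¹ * t ^ ((3:ℝ)/2) := by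
      rw [Real.mul_rpow hb.le ht.le, ← Real.rpow_mul hh0.le,
        show (-(2:ℝ)/3) * ((3:ℝ)/2) = -1 by norm_num, Real.rpow_neg_one]
    simp only [hF]
    rw [mul_pow, e1, e2,
      show (1:ℝ)/16 * t ^ ((3:ℝ)/2) / h = h⁻¹ * t ^ ((3:ℝ)/2) / 16 by ring]
    ring
  have hcalc : (∫ t in Set.Ioi (0:ℝ), Real.exp (1/16 * t ^ ((3:ℝ)/2) / h) *
      (h ^ (-(1:ℝ)/3) * Ai (h ^ (-(2:ℝ)/3) * t - z₁)) ^ 2) = c := by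
    rw [setIntegral_congr_fun measurableSet_Ioi heq, MeasureTheory.integral_const_mul,
      integral_comp_mul_left_Ioi F 0 hb, mul_zero, smul_eq_mul, ← mul_assoc,
      mul_inv_cancel₀ (ne_of_gt hb), one_mul]
  exact le_of_eq hcalc
end
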